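/- arXiv:1511.07784 — 3 statements merged into one kernel-verified Lean document; each statement's English description precedes it below -/
import Mathlib

section
/- Let t ≥ 3 be an odd integer, let n be odd, let D be an adjusted t-decomposition of K_n, and let H be an undirected graph on n vertices with maximum degree at most d. Then the number of atypical labeled copies of H in K_n (with respect to D) is at most 11·d³·t⁴·(n−1)!. -/
/-!
An atypical copy `π` sends a small configuration of `H` into a single member `P` of `D`: two edges
into a member that is not a `K_t` (sharing a vertex, hence a cherry of the graph `B` of all
non-`K_t` edges, or disjoint), or three edges into a `K_t` member that do not form a triangle (a
star, a path, a cherry plus an edge, or three disjoint edges). On a configuration with `k` vertices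
the copy is pinned on an injective `k`-tuple, which leaves at most `(n - k)!` permutations. `H` has
at most `n ^ c * d ^ (k - c)` configurations with `c` components, and the target tuples are few:
one edge of `P` determines `P`, whose vertex set has at most `t`, resp. `2t - 1`, elements, and `B`
has maximum degree `3t - 5`. Each configuration type thus contributes
`O(d³ t⁴ n ^ (k - 1) (n - k)!)`, and `n ^ (k - 1) (n - k)! ≤ 2 (n - 1)!` once `n > 11 d³ t⁴`;
for smaller `n` the trivial bound `n!` suffices.
-/

open scoped Classical

/-- The edge set of the complete graph on a vertex subset `s` of `Fin n`:
all non-diagonal unordered pairs with both endpoints in `s`. -/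
noncomputable def cliqueEdges {n : ℕ} (s : Finset (Fin n)) : Finset (Sym2 (Fin n)) :=
  Finset.univ.filter fun e => ¬ e.IsDiag ∧ ∀ x ∈ e, x ∈ s

/-- A set of edges of `K_n` is a copy of `K_m` if it is the set of all pairs
of some `m`-element vertex set. -/
def IsKClique {n : ℕ} (m : ℕ) (P : Finset (Sym2 (Fin n))) : Prop :=
  ∃ s : Finset (Fin n), s.card = m ∧ P = cliqueEdges s

/-- A set of edges of `K_n` is a cycle of length 4. -/
def IsC4 {n : ℕ} (P : Finset (Sym2 (Fin n))) : Prop :=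
  ∃ a b c d : Fin n, [a, b, c, d].Nodup ∧
    P = {s(a, b), s(b, c), s(c, d), s(d, a)}

/-- A decomposition of `K_n`: a family of (nonempty, loopless) edge sets such
that every edge of `K_n` lies in exactly one member. -/
def IsDecompKn (n : ℕ) (D : Finset (Finset (Sym2 (Fin n)))) : Prop :=
  (∀ P ∈ D, P.Nonempty ∧ ∀ e ∈ P, ¬ e.IsDiag) ∧
  (∀ e : Sym2 (Fin n), ¬ e.IsDiag → ∃! P, P ∈ D ∧ e ∈ P)

/-- An adjusted `t`-decomposition of `K_n` (Definition 2.4): a decomposition whose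
members are copies of `K_t`, except for at most `n(t-3)/6` triangles, at most `t-3`
cycles of length 4 and at most `t-1` copies of `K_{2t-1}`, with the non-`K_t`
members together forming a graph `B` of maximum degree at most `3t-5`. -/
noncomputable def IsAdjustedDecomp (t n : ℕ) (D : Finset (Finset (Sym2 (Fin n)))) : Prop :=
  IsDecompKn n D ∧
  (∀ P ∈ D, IsKClique t P ∨ IsKClique 3 P ∨ IsC4 P ∨ IsKClique (2 * t - 1) P) ∧
  (∀ v : Fin n,
    (((D.filter fun P => ¬ IsKClique t P).biUnion id).filter fun e => v ∈ e).card
      ≤ 3 * t - 5) ∧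
  (D.filter fun P => ¬ IsKClique t P ∧ IsKClique 3 P).card * 6 ≤ n * (t - 3) ∧
  (D.filter fun P => ¬ IsKClique t P ∧ IsC4 P).card ≤ t - 3 ∧
  (D.filter fun P => ¬ IsKClique t P ∧ IsKClique (2 * t - 1) P).card ≤ t - 1

/-- A labeled copy (a bijection `π` of `Fin n`) of the graph `H` is *atypical* with
respect to the adjusted `t`-decomposition `D` if some non-`K_t` member of `D` contains at
least two edges of the copy, or some `K_t` member of `D` contains three edges of the copy
not inducing a triangle. -/
def Atypical {n : ℕ} (t : ℕ) (D : Finset (Finset (Sym2 (Fin n))))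
    (H : SimpleGraph (Fin n)) (π : Equiv.Perm (Fin n)) : Prop :=
  (∃ P ∈ D, ¬ IsKClique t P ∧
    ∃ e ∈ H.edgeSet, ∃ f ∈ H.edgeSet, e ≠ f ∧
      Sym2.map π e ∈ P ∧ Sym2.map π f ∈ P) ∨
  (∃ P ∈ D, IsKClique t P ∧
    ∃ e ∈ H.edgeSet, ∃ f ∈ H.edgeSet, ∃ g ∈ H.edgeSet,
      e ≠ f ∧ e ≠ g ∧ f ≠ g ∧
      Sym2.map π e ∈ P ∧ Sym2.map π f ∈ P ∧ Sym2.map π g ∈ P ∧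
      ¬ ∃ x y z : Fin n, e = s(x, y) ∧ f = s(y, z) ∧ g = s(x, z))

open Finset Function Equiv
open scoped Nat

def MapsSomeInto {α : Type*} {k : ℕ} (X U : Finset (Fin k → α)) (π : Perm α) : Prop :=
  ∃ x ∈ X, Injective x ∧ ⇑π ∘ x ∈ U

section Pinning

variable {α : Type*} [Fintype α] [DecidableEq α]

theorem card_perm_fixing_pointwise (S : Finset α) :
    #{σ : Perm α | ∀ a ∈ S, σ a = a} = (Fintype.card α - #S)! := by
  have e := Perm.subtypeEquivSubtypePerm (fun a => a ∉ S)
  simp only [not_not] at e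
  rw [← Fintype.card_subtype, ← Fintype.card_congr e, Fintype.card_perm,
    Fintype.card_subtype_compl, Fintype.card_coe]

theorem card_perm_apply_eq_le {k : ℕ} {x : Fin k → α} (hx : Injective x) (u : Fin k → α) :
    #{π : Perm α | ∀ i, π (x i) = u i} ≤ (Fintype.card α - k)! := by
  obtain h | ⟨π₀, hπ₀⟩ := Finset.eq_empty_or_nonempty {π : Perm α | ∀ i, π (x i) = u i}
  · simp [h]
  calc _ ≤ #{σ : Perm α | ∀ a ∈ univ.image x, σ a = a} := by
        refine card_le_card_of_injOn (π₀⁻¹ * ·) (fun π hπ => ?_) fun π _ σ _ h => mul_left_cancel h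
        simp only [coe_filter, Set.mem_ofPred_eq, mem_filter, mem_univ, true_and, mem_image]
          at hπ₀ hπ ⊢
        rintro _ ⟨i, -, rfl⟩
        simp [hπ, ← hπ₀]
    _ = (Fintype.card α - k)! := by
        rw [card_perm_fixing_pointwise, card_image_of_injective _ hx, card_univ, Fintype.card_fin]

theorem card_mapsSomeInto_le {k : ℕ} (X U : Finset (Fin k → α)) :
    #{π | MapsSomeInto X U π} ≤ #X * #U * (Fintype.card α - k)! := by
  calc #{π | MapsSomeInto X U π}
      ≤ #((X.filter Injective ×ˢ U).biUnion fun p => {π : Perm α | ∀ i, π (p.1 i) = p.2 i}) := by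
        refine card_le_card fun π hπ => ?_
        obtain ⟨x, hxX, hx, hxU⟩ := (mem_filter.1 hπ).2
        exact mem_biUnion.2 ⟨(x, ⇑π ∘ x), by simp [hxX, hx, hxU], by simp⟩
    _ ≤ ∑ p ∈ X.filter Injective ×ˢ U, (Fintype.card α - k)! := by
        refine card_biUnion_le.trans (sum_le_sum fun p hp => ?_)
        exact card_perm_apply_eq_le (mem_filter.1 (mem_product.1 hp).1).2 p.2
    _ ≤ #X * #U * (Fintype.card α - k)! := by
        rw [sum_const, card_product, smul_eq_mul]
        gcongr
        exact filter_subset _ _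

end Pinning

theorem card_le_card_mul_of_init {α : Type*} {k m : ℕ} {X : Finset (Fin (k + 1) → α)}
    {Y : Finset (Fin k → α)} (hY : ∀ x ∈ X, Fin.init x ∈ Y)
    (hext : ∀ y ∈ Y, ∃ A : Finset α, #A ≤ m ∧ ∀ x ∈ X, Fin.init x = y → x (Fin.last k) ∈ A) :
    #X ≤ #Y * m := by
  rw [mul_comm]
  refine card_le_mul_card_image_of_maps_to hY m fun y hy => ?_
  obtain ⟨A, hA, hxA⟩ := hext y hy
  refine (card_le_card_of_injOn (· (Fin.last k)) (fun x hx => ?_) fun x hx x' hx' h => ?_).trans hA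
  · simp only [coe_filter, Set.mem_ofPred_eq] at hx
    exact hxA x hx.1 hx.2
  · simp only [coe_filter, Set.mem_ofPred_eq] at hx hx'
    rw [← Fin.snoc_init_self x, ← Fin.snoc_init_self x', hx.2, hx'.2]
    exact congrArg _ h

section Patterns

variable {α : Type*}

/-- A pattern `pat` lists the edges of a small graph on `Fin k`; `Realizes E pat x` says that the
tuple `x` sends every pattern edge to an edge in `E`. -/
def Realizes (E : Set (Sym2 α)) {k : ℕ} (pat : Finset (Fin k × Fin k)) (x : Fin k → α) : Prop :=
  ∀ p ∈ pat, s(x p.1, x p.2) ∈ E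

theorem Realizes.mono {E E' : Set (Sym2 α)} {k : ℕ} {pat : Finset (Fin k × Fin k)} {x : Fin k → α}
    (h : Realizes E pat x) (hE : E ⊆ E') : Realizes E' pat x :=
  fun p hp => hE (h p hp)

noncomputable def realizers [Fintype α] (E : Set (Sym2 α)) {k : ℕ} (pat : Finset (Fin k × Fin k)) :
    Finset (Fin k → α) :=
  {x | Realizes E pat x}

@[simp]
theorem mem_realizers [Fintype α] {E : Set (Sym2 α)} {k : ℕ} {pat : Finset (Fin k × Fin k)}
    {x : Fin k → α} : x ∈ realizers E pat ↔ Realizes E pat x := by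
  simp [realizers]

theorem realizes_comp_iff {β : Type*} (f : α → β) (E : Set (Sym2 β)) {k : ℕ}
    (pat : Finset (Fin k × Fin k)) (x : Fin k → α) :
    Realizes E pat (f ∘ x) ↔ Realizes (Sym2.map f ⁻¹' E) pat x := by
  simp [Realizes]

def edgePat : Finset (Fin 2 × Fin 2) := {(0, 1)}
def cherryPat : Finset (Fin 3 × Fin 3) := {(0, 1), (0, 2)}
def matchingPat₂ : Finset (Fin 4 × Fin 4) := {(0, 1), (2, 3)}
def starPat : Finset (Fin 4 × Fin 4) := {(0, 1), (0, 2), (0, 3)}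
def pathPat : Finset (Fin 4 × Fin 4) := {(0, 1), (1, 2), (2, 3)}
def cherryEdgePat : Finset (Fin 5 × Fin 5) := {(0, 1), (0, 2), (3, 4)}
def matchingPat₃ : Finset (Fin 6 × Fin 6) := {(0, 1), (2, 3), (4, 5)}

end Patterns

section RealizerCounts

variable {α : Type*} [Fintype α] (E : Set (Sym2 α))

theorem card_realizers_snoc_le {k m : ℕ} {pat : Finset (Fin (k + 1) × Fin (k + 1))}
    {pat' : Finset (Fin k × Fin k)} (hres : ∀ p ∈ pat', (p.1.castSucc, p.2.castSucc) ∈ pat)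
    (A : (Fin k → α) → Finset α) (hA : ∀ y, #(A y) ≤ m)
    (hlast : ∀ x, Realizes E pat x → x (Fin.last k) ∈ A (Fin.init x)) :
    #(realizers E pat) ≤ #(realizers E pat') * m :=
  card_le_card_mul_of_init
    (fun _ hx => mem_filter.2 ⟨mem_univ _, fun p hp => (mem_filter.1 hx).2 _ (hres p hp)⟩)
    fun y _ => ⟨A y, hA y, fun x hx hxy => hxy ▸ hlast x (mem_filter.1 hx).2⟩

theorem card_realizers_snoc_le_mul_card {k : ℕ} {pat : Finset (Fin (k + 1) × Fin (k + 1))}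
    {pat' : Finset (Fin k × Fin k)} (hres : ∀ p ∈ pat', (p.1.castSucc, p.2.castSucc) ∈ pat) :
    #(realizers E pat) ≤ #(realizers E pat') * Fintype.card α :=
  card_realizers_snoc_le E hres (fun _ => univ) (fun _ => le_rfl) fun _ _ => mem_univ _

variable {E} {Δ : ℕ} (hE : ∀ v, {w | s(v, w) ∈ E}.ncard ≤ Δ)
include hE

theorem card_realizers_snoc_le_mul_degree {k : ℕ} {pat : Finset (Fin (k + 1) × Fin (k + 1))}
    {pat' : Finset (Fin k × Fin k)} (hres : ∀ p ∈ pat', (p.1.castSucc, p.2.castSucc) ∈ pat)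
    (i : Fin k) (hi : (i.castSucc, Fin.last k) ∈ pat) :
    #(realizers E pat) ≤ #(realizers E pat') * Δ :=
  card_realizers_snoc_le E hres (fun y => {w | s(y i, w) ∈ E})
    (fun y => by simpa [← Set.ncard_coe_finset] using hE (y i))
    fun _ hx => mem_filter.2 ⟨mem_univ _, hx _ hi⟩

theorem card_realizers_edgePat_le : #(realizers E edgePat) ≤ Fintype.card α * Δ :=
  calc _ ≤ #(realizers E (k := 1) ∅) * Δ :=
        card_realizers_snoc_le_mul_degree hE (by decide) 0 (by decide)
    _ ≤ Fintype.card α * Δ := by gcongr; exact (card_le_univ _).trans_eq (by simp)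

theorem card_realizers_cherryPat_le : #(realizers E cherryPat) ≤ Fintype.card α * Δ ^ 2 :=
  calc _ ≤ #(realizers E edgePat) * Δ :=
        card_realizers_snoc_le_mul_degree hE (by decide) 0 (by decide)
    _ ≤ Fintype.card α * Δ * Δ := by gcongr; exact card_realizers_edgePat_le hE
    _ = Fintype.card α * Δ ^ 2 := by ring

theorem card_realizers_matchingPat₂_le :
    #(realizers E matchingPat₂) ≤ (Fintype.card α * Δ) ^ 2 :=
  calc _ ≤ #(realizers E (k := 3) {(0, 1)}) * Δ :=
        card_realizers_snoc_le_mul_degree hE (by decide) 2 (by decide)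
    _ ≤ #(realizers E edgePat) * Fintype.card α * Δ := by
        gcongr; exact card_realizers_snoc_le_mul_card E (by decide)
    _ ≤ Fintype.card α * Δ * Fintype.card α * Δ := by gcongr; exact card_realizers_edgePat_le hE
    _ = (Fintype.card α * Δ) ^ 2 := by ring

theorem card_realizers_starPat_le : #(realizers E starPat) ≤ Fintype.card α * Δ ^ 3 :=
  calc _ ≤ #(realizers E cherryPat) * Δ :=
        card_realizers_snoc_le_mul_degree hE (by decide) 0 (by decide)
    _ ≤ Fintype.card α * Δ ^ 2 * Δ := by gcongr; exact card_realizers_cherryPat_le hE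
    _ = Fintype.card α * Δ ^ 3 := by ring

theorem card_realizers_pathPat_le : #(realizers E pathPat) ≤ Fintype.card α * Δ ^ 3 :=
  calc _ ≤ #(realizers E (k := 3) {(0, 1), (1, 2)}) * Δ :=
        card_realizers_snoc_le_mul_degree hE (by decide) 2 (by decide)
    _ ≤ #(realizers E edgePat) * Δ * Δ := by
        gcongr; exact card_realizers_snoc_le_mul_degree hE (by decide) 1 (by decide)
    _ ≤ Fintype.card α * Δ * Δ * Δ := by gcongr; exact card_realizers_edgePat_le hE
    _ = Fintype.card α * Δ ^ 3 := by ring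

theorem card_realizers_cherryEdgePat_le :
    #(realizers E cherryEdgePat) ≤ Fintype.card α ^ 2 * Δ ^ 3 :=
  calc _ ≤ #(realizers E (k := 4) {(0, 1), (0, 2)}) * Δ :=
        card_realizers_snoc_le_mul_degree hE (by decide) 3 (by decide)
    _ ≤ #(realizers E cherryPat) * Fintype.card α * Δ := by
        gcongr; exact card_realizers_snoc_le_mul_card E (by decide)
    _ ≤ Fintype.card α * Δ ^ 2 * Fintype.card α * Δ := by
        gcongr; exact card_realizers_cherryPat_le hE
    _ = Fintype.card α ^ 2 * Δ ^ 3 := by ring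

theorem card_realizers_matchingPat₃_le :
    #(realizers E matchingPat₃) ≤ (Fintype.card α * Δ) ^ 3 :=
  calc _ ≤ #(realizers E (k := 5) {(0, 1), (2, 3)}) * Δ :=
        card_realizers_snoc_le_mul_degree hE (by decide) 4 (by decide)
    _ ≤ #(realizers E matchingPat₂) * Fintype.card α * Δ := by
        gcongr; exact card_realizers_snoc_le_mul_card E (by decide)
    _ ≤ (Fintype.card α * Δ) ^ 2 * Fintype.card α * Δ := by
        gcongr; exact card_realizers_matchingPat₂_le hE
    _ = (Fintype.card α * Δ) ^ 3 := by ring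

end RealizerCounts

section Members

variable {α : Type*} [Fintype α] [DecidableEq α]

noncomputable def verts (P : Finset (Sym2 α)) : Finset α := {v | ∃ e ∈ P, v ∈ e}

noncomputable def memberTuples (D : Finset (Finset (Sym2 α))) (k : ℕ) : Finset (Fin (k + 2) → α) :=
  {u | ∃ P ∈ D, s(u 0, u 1) ∈ P ∧ ∀ i, u i ∈ verts P}

theorem card_memberTuples_le {D : Finset (Finset (Sym2 α))}
    (hD : (D : Set (Finset (Sym2 α))).PairwiseDisjoint id) {m : ℕ}
    (hm : ∀ P ∈ D, #(verts P) ≤ m) (k : ℕ) :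
    #(memberTuples D k) ≤ #{u : Fin 2 → α | ∃ P ∈ D, s(u 0, u 1) ∈ P} * m ^ k := by
  induction k with
  | zero =>
    rw [pow_zero, mul_one]
    refine card_le_card fun u hu => ?_
    obtain ⟨P, hP, h01, -⟩ := (mem_filter.1 hu).2
    exact mem_filter.2 ⟨mem_univ _, P, hP, h01⟩
  | succ k ih =>
    refine (card_le_card_mul_of_init (Y := memberTuples D k) (m := m) (fun u hu => ?_)
      fun y hy => ?_).trans (by rw [pow_succ, ← mul_assoc]; exact Nat.mul_le_mul_right m ih)
    · obtain ⟨P, hP, h01, hu⟩ := (mem_filter.1 hu).2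
      exact mem_filter.2 ⟨mem_univ _, P, hP, h01, fun i => hu _⟩
    · obtain ⟨P, hP, h01, -⟩ := (mem_filter.1 hy).2
      refine ⟨verts P, hm P hP, fun u hu hy => ?_⟩
      obtain ⟨P', hP', h01', hu⟩ := (mem_filter.1 hu).2
      rw [hD.elim_finset hP hP' _ h01 (hy ▸ h01')]
      exact hu _

theorem mem_memberTuples_of_realizes {D : Finset (Finset (Sym2 α))} {P : Finset (Sym2 α)}
    (hP : P ∈ D) {k : ℕ} {pat : Finset (Fin (k + 2) × Fin (k + 2))} (h01 : (0, 1) ∈ pat)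
    (hcover : ∀ i, ∃ p ∈ pat, i = p.1 ∨ i = p.2) {u : Fin (k + 2) → α}
    (hu : Realizes (P : Set (Sym2 α)) pat u) : u ∈ memberTuples D k := by
  refine mem_filter.2 ⟨mem_univ _, P, hP, hu _ h01, fun i => ?_⟩
  obtain ⟨p, hp, hi⟩ := hcover i
  refine mem_filter.2 ⟨mem_univ _, _, hu p hp, ?_⟩
  rcases hi with rfl | rfl
  exacts [Sym2.mem_mk_left _ _, Sym2.mem_mk_right _ _]

end Members

section Adjusted

variable {t n : ℕ} {D : Finset (Finset (Sym2 (Fin n)))}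

theorem verts_cliqueEdges_subset (S : Finset (Fin n)) : verts (cliqueEdges S) ⊆ S := by
  intro v hv
  obtain ⟨e, he, hve⟩ := (mem_filter.1 hv).2
  exact (mem_filter.1 he).2.2 v hve

theorem IsKClique.card_verts_le {m : ℕ} {P : Finset (Sym2 (Fin n))} (h : IsKClique m P) :
    #(verts P) ≤ m := by
  obtain ⟨S, rfl, rfl⟩ := h
  exact card_le_card (verts_cliqueEdges_subset S)

theorem IsC4.card_verts_le {P : Finset (Sym2 (Fin n))} (h : IsC4 P) : #(verts P) ≤ 4 := by
  obtain ⟨a, b, c, d, -, rfl⟩ := h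
  refine (card_le_card (t := {a, b, c, d}) fun v hv => ?_).trans card_le_four
  obtain ⟨e, he, hve⟩ := (mem_filter.1 hv).2
  simp only [mem_insert, mem_singleton] at he ⊢
  rcases he with rfl | rfl | rfl | rfl <;> simp only [Sym2.mem_iff] at hve <;> tauto

theorem IsAdjustedDecomp.card_verts_le (hD : IsAdjustedDecomp t n D) (ht : 3 ≤ t)
    {P : Finset (Sym2 (Fin n))} (hP : P ∈ D) (hPt : ¬ IsKClique t P) :
    #(verts P) ≤ 2 * t - 1 := by
  rcases hD.2.1 P hP with h | h | h | h
  · exact absurd h hPt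
  · exact h.card_verts_le.trans (by omega)
  · exact h.card_verts_le.trans (by omega)
  · exact h.card_verts_le

noncomputable def nonCliqueEdges (t : ℕ) (D : Finset (Finset (Sym2 (Fin n)))) :
    Finset (Sym2 (Fin n)) :=
  (D.filter fun P => ¬ IsKClique t P).biUnion id

theorem IsAdjustedDecomp.ncard_nonCliqueEdges_nbr_le (hD : IsAdjustedDecomp t n D) (v : Fin n) :
    {w | s(v, w) ∈ (nonCliqueEdges t D : Set (Sym2 (Fin n)))}.ncard ≤ 3 * t - 5 := by
  rw [← coe_filter_univ, Set.ncard_coe_finset]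
  refine (card_le_card_of_injOn (fun w => s(v, w)) (fun w hw => ?_)
    fun w _ w' _ h => Sym2.congr_right.1 h).trans (hD.2.2.1 v)
  simp only [coe_filter, Set.mem_ofPred_eq, mem_univ, true_and, mem_coe] at hw
  exact mem_filter.2 ⟨hw, Sym2.mem_mk_left v w⟩

theorem IsDecompKn.pairwiseDisjoint (hD : IsDecompKn n D) :
    (D : Set (Finset (Sym2 (Fin n)))).PairwiseDisjoint id := by
  intro P hP P' hP' hne
  refine disjoint_left.2 fun e he he' => hne ?_
  exact (hD.2 e ((hD.1 P hP).2 e he)).unique ⟨hP, he⟩ ⟨hP', he'⟩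

theorem IsAdjustedDecomp.card_memberTuples_nonClique_le (hD : IsAdjustedDecomp t n D)
    (ht : 3 ≤ t) (k : ℕ) :
    #(memberTuples (D.filter fun P => ¬ IsKClique t P) k) ≤ n * (3 * t - 5) * (2 * t - 1) ^ k := by
  refine (card_memberTuples_le (hD.1.pairwiseDisjoint.subset (filter_subset _ _))
    (fun P hP => hD.card_verts_le ht (mem_filter.1 hP).1 (mem_filter.1 hP).2) k).trans ?_
  gcongr
  refine (card_le_card fun u hu => ?_).trans
    ((card_realizers_edgePat_le hD.ncard_nonCliqueEdges_nbr_le).trans_eq (by simp))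
  obtain ⟨P, hP, h01⟩ := (mem_filter.1 hu).2
  simp only [mem_realizers, Realizes, edgePat, mem_singleton, forall_eq]
  exact mem_coe.2 (mem_biUnion.2 ⟨P, hP, h01⟩)

theorem IsDecompKn.card_memberTuples_clique_le (hD : IsDecompKn n D) (k : ℕ) :
    #(memberTuples (D.filter (IsKClique t)) k) ≤ n ^ 2 * t ^ k := by
  refine (card_memberTuples_le (hD.pairwiseDisjoint.subset (filter_subset _ _))
    (fun P hP => (mem_filter.1 hP).2.card_verts_le) k).trans ?_
  gcongr
  exact (card_le_univ _).trans_eq (by simp)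

end Adjusted

section Shapes

variable {α : Type*} {e f g : Sym2 α}

theorem exists_injective_cherry (hef : e ≠ f) (he : ¬ e.IsDiag) (hf : ¬ f.IsDiag) {v : α}
    (hve : v ∈ e) (hvf : v ∈ f) :
    ∃ x : Fin 3 → α, Injective x ∧ s(x 0, x 1) = e ∧ s(x 0, x 2) = f := by
  obtain ⟨a, rfl⟩ := Sym2.mem_iff_exists.1 hve
  obtain ⟨b, rfl⟩ := Sym2.mem_iff_exists.1 hvf
  refine ⟨![v, a, b], ?_, rfl, rfl⟩
  have hab : a ≠ b := by rintro rfl; exact hef rfl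
  simp only [Sym2.mk_isDiag_iff] at he hf
  rw [← List.nodup_ofFn]; simp [*]

theorem exists_injective_matching₂ (he : ¬ e.IsDiag) (hf : ¬ f.IsDiag)
    (hef : ¬ ∃ v, v ∈ e ∧ v ∈ f) :
    ∃ x : Fin 4 → α, Injective x ∧ s(x 0, x 1) = e ∧ s(x 2, x 3) = f := by
  induction e using Sym2.ind with | _ a b => ?_
  induction f using Sym2.ind with | _ c d => ?_
  refine ⟨![a, b, c, d], ?_, rfl, rfl⟩
  simp only [Sym2.mk_isDiag_iff, Sym2.mem_iff, or_and_right, exists_or, exists_eq_left] at he hf hef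
  simp only [← List.nodup_ofFn, List.ofFn_succ, List.ofFn_zero, Matrix.cons_val_zero,
    Matrix.cons_val_succ]
  grind

theorem exists_injective_star (hef : e ≠ f) (heg : e ≠ g) (hfg : f ≠ g) (he : ¬ e.IsDiag)
    (hf : ¬ f.IsDiag) (hg : ¬ g.IsDiag) {v : α} (hve : v ∈ e) (hvf : v ∈ f) (hvg : v ∈ g) :
    ∃ x : Fin 4 → α, Injective x ∧ s(x 0, x 1) = e ∧ s(x 0, x 2) = f ∧ s(x 0, x 3) = g := by
  obtain ⟨a, rfl⟩ := Sym2.mem_iff_exists.1 hve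
  obtain ⟨b, rfl⟩ := Sym2.mem_iff_exists.1 hvf
  obtain ⟨c, rfl⟩ := Sym2.mem_iff_exists.1 hvg
  refine ⟨![v, a, b, c], ?_, rfl, rfl, rfl⟩
  simp only [Sym2.mk_isDiag_iff, ne_eq, Sym2.congr_right] at he hf hg hef heg hfg
  rw [← List.nodup_ofFn]; simp [*]

theorem exists_injective_path (he : ¬ e.IsDiag) (hf : ¬ f.IsDiag)
    (hef : ¬ ∃ v, v ∈ e ∧ v ∈ f) {v w : α} (hve : v ∈ e) (hvg : v ∈ g) (hwf : w ∈ f)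
    (hwg : w ∈ g) :
    ∃ x : Fin 4 → α, Injective x ∧ s(x 0, x 1) = e ∧ s(x 1, x 2) = g ∧ s(x 2, x 3) = f := by
  obtain ⟨a, rfl⟩ := Sym2.mem_iff_exists.1 hve
  obtain ⟨b, rfl⟩ := Sym2.mem_iff_exists.1 hwf
  have hvw : v ≠ w := by rintro rfl; exact hef ⟨v, Sym2.mem_mk_left _ _, Sym2.mem_mk_left _ _⟩
  refine ⟨![a, v, w, b], ?_, Sym2.eq_swap, ((Sym2.mem_and_mem_iff hvw).1 ⟨hvg, hwg⟩).symm, rfl⟩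
  simp only [Sym2.mk_isDiag_iff, Sym2.mem_iff, or_and_right, exists_or, exists_eq_left] at he hf hef
  simp only [← List.nodup_ofFn, List.ofFn_succ, List.ofFn_zero, Matrix.cons_val_zero,
    Matrix.cons_val_succ]
  grind

theorem exists_injective_cherryEdge (hef : e ≠ f) (he : ¬ e.IsDiag) (hf : ¬ f.IsDiag)
    (hg : ¬ g.IsDiag) {v : α} (hve : v ∈ e) (hvf : v ∈ f) (heg : ¬ ∃ w, w ∈ e ∧ w ∈ g)
    (hfg : ¬ ∃ w, w ∈ f ∧ w ∈ g) :
    ∃ x : Fin 5 → α, Injective x ∧ s(x 0, x 1) = e ∧ s(x 0, x 2) = f ∧ s(x 3, x 4) = g := by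
  obtain ⟨a, rfl⟩ := Sym2.mem_iff_exists.1 hve
  obtain ⟨b, rfl⟩ := Sym2.mem_iff_exists.1 hvf
  induction g using Sym2.ind with | _ c d => ?_
  refine ⟨![v, a, b, c, d], ?_, rfl, rfl, rfl⟩
  simp only [Sym2.mk_isDiag_iff, Sym2.mem_iff, ne_eq, Sym2.congr_right, or_and_right, exists_or,
    exists_eq_left] at hef he hf hg heg hfg
  simp only [← List.nodup_ofFn, List.ofFn_succ, List.ofFn_zero, Matrix.cons_val_zero,
    Matrix.cons_val_succ]
  grind

theorem exists_injective_matching₃ (he : ¬ e.IsDiag) (hf : ¬ f.IsDiag) (hg : ¬ g.IsDiag)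
    (hef : ¬ ∃ v, v ∈ e ∧ v ∈ f) (heg : ¬ ∃ v, v ∈ e ∧ v ∈ g) (hfg : ¬ ∃ v, v ∈ f ∧ v ∈ g) :
    ∃ x : Fin 6 → α, Injective x ∧ s(x 0, x 1) = e ∧ s(x 2, x 3) = f ∧ s(x 4, x 5) = g := by
  induction e using Sym2.ind with | _ a b => ?_
  induction f using Sym2.ind with | _ c d => ?_
  induction g using Sym2.ind with | _ p q => ?_
  refine ⟨![a, b, c, d, p, q], ?_, rfl, rfl, rfl⟩
  simp only [Sym2.mk_isDiag_iff, Sym2.mem_iff, or_and_right, exists_or,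
    exists_eq_left] at he hf hg hef heg hfg
  simp only [← List.nodup_ofFn, List.ofFn_succ, List.ofFn_zero, Matrix.cons_val_zero,
    Matrix.cons_val_succ]
  grind

theorem exists_triangle_of_meet (hef : e ≠ f) {v : α} (hve : v ∈ e) (hvf : v ∈ f) (hvg : v ∉ g)
    (heg : ∃ w, w ∈ e ∧ w ∈ g) (hfg : ∃ w, w ∈ f ∧ w ∈ g) :
    ∃ x y z, e = s(x, y) ∧ f = s(y, z) ∧ g = s(x, z) := by
  obtain ⟨a, rfl⟩ := Sym2.mem_iff_exists.1 hve
  obtain ⟨b, rfl⟩ := Sym2.mem_iff_exists.1 hvf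
  have other_mem {c w : α} (hw : w ∈ s(v, c)) (hwg : w ∈ g) : c ∈ g := by
    rcases Sym2.mem_iff.1 hw with rfl | rfl
    exacts [absurd hwg hvg, hwg]
  obtain ⟨w, hwe, hwg⟩ := heg
  obtain ⟨w', hwf, hw'g⟩ := hfg
  have hab : a ≠ b := by rintro rfl; exact hef rfl
  exact ⟨a, v, b, Sym2.eq_swap, rfl,
    (Sym2.mem_and_mem_iff hab).1 ⟨other_mem hwe hwg, other_mem hwf hw'g⟩⟩

theorem exists_realizes_of_two_edges (E : Set (Sym2 α)) (he : e ∈ E) (hf : f ∈ E)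
    (hed : ¬ e.IsDiag) (hfd : ¬ f.IsDiag) (hef : e ≠ f) :
    (∃ x : Fin 3 → α, Injective x ∧ Realizes E cherryPat x) ∨
      ∃ x : Fin 4 → α, Injective x ∧ Realizes E matchingPat₂ x := by
  by_cases hm : ∃ v, v ∈ e ∧ v ∈ f
  · obtain ⟨v, hve, hvf⟩ := hm
    obtain ⟨x, hx, h₁, h₂⟩ := exists_injective_cherry hef hed hfd hve hvf
    exact Or.inl ⟨x, hx, by simp [Realizes, cherryPat, h₁, h₂, he, hf]⟩
  · obtain ⟨x, hx, h₁, h₂⟩ := exists_injective_matching₂ hed hfd hm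
    exact Or.inr ⟨x, hx, by simp [Realizes, matchingPat₂, h₁, h₂, he, hf]⟩

theorem exists_realizes_of_three_edges (E : Set (Sym2 α)) (he : e ∈ E) (hf : f ∈ E) (hg : g ∈ E)
    (hed : ¬ e.IsDiag) (hfd : ¬ f.IsDiag) (hgd : ¬ g.IsDiag) (hef : e ≠ f) (heg : e ≠ g)
    (hfg : f ≠ g) (hnt : ¬ ∃ x y z, e = s(x, y) ∧ f = s(y, z) ∧ g = s(x, z)) :
    (∃ x : Fin 4 → α, Injective x ∧ (Realizes E starPat x ∨ Realizes E pathPat x)) ∨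
      (∃ x : Fin 5 → α, Injective x ∧ Realizes E cherryEdgePat x) ∨
      ∃ x : Fin 6 → α, Injective x ∧ Realizes E matchingPat₃ x := by
  by_cases mef : ∃ v, v ∈ e ∧ v ∈ f <;> by_cases meg : ∃ v, v ∈ e ∧ v ∈ g <;>
    by_cases mfg : ∃ v, v ∈ f ∧ v ∈ g
  · obtain ⟨v, hve, hvf⟩ := mef
    by_cases hvg : v ∈ g
    · obtain ⟨x, hx, h₁, h₂, h₃⟩ := exists_injective_star hef heg hfg hed hfd hgd hve hvf hvg
      exact Or.inl ⟨x, hx, Or.inl (by simp [Realizes, starPat, h₁, h₂, h₃, he, hf, hg])⟩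
    · exact absurd (exists_triangle_of_meet hef hve hvf hvg meg mfg) hnt
  · obtain ⟨v, hve, hvf⟩ := mef
    obtain ⟨w, hwe, hwg⟩ := meg
    obtain ⟨x, hx, h₁, h₂, h₃⟩ := exists_injective_path hfd hgd mfg hvf hve hwg hwe
    exact Or.inl ⟨x, hx, Or.inr (by simp [Realizes, pathPat, h₁, h₂, h₃, he, hf, hg])⟩
  · obtain ⟨v, hve, hvf⟩ := mef
    obtain ⟨w, hwf, hwg⟩ := mfg
    obtain ⟨x, hx, h₁, h₂, h₃⟩ := exists_injective_path hed hgd meg hve hvf hwg hwf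
    exact Or.inl ⟨x, hx, Or.inr (by simp [Realizes, pathPat, h₁, h₂, h₃, he, hf, hg])⟩
  · obtain ⟨v, hve, hvf⟩ := mef
    obtain ⟨x, hx, h₁, h₂, h₃⟩ := exists_injective_cherryEdge hef hed hfd hgd hve hvf meg mfg
    exact Or.inr (Or.inl ⟨x, hx, by simp [Realizes, cherryEdgePat, h₁, h₂, h₃, he, hf, hg]⟩)
  · obtain ⟨v, hve, hvg⟩ := meg
    obtain ⟨w, hwf, hwg⟩ := mfg
    obtain ⟨x, hx, h₁, h₂, h₃⟩ := exists_injective_path hed hfd mef hve hvg hwf hwg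
    exact Or.inl ⟨x, hx, Or.inr (by simp [Realizes, pathPat, h₁, h₂, h₃, he, hf, hg])⟩
  · obtain ⟨v, hve, hvg⟩ := meg
    obtain ⟨x, hx, h₁, h₂, h₃⟩ := exists_injective_cherryEdge heg hed hgd hfd hve hvg mef
      fun ⟨w, hwg, hwf⟩ => mfg ⟨w, hwf, hwg⟩
    exact Or.inr (Or.inl ⟨x, hx, by simp [Realizes, cherryEdgePat, h₁, h₂, h₃, he, hf, hg]⟩)
  · obtain ⟨v, hvf, hvg⟩ := mfg
    obtain ⟨x, hx, h₁, h₂, h₃⟩ := exists_injective_cherryEdge hfg hfd hgd hed hvf hvg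
      (fun ⟨w, hwf, hwe⟩ => mef ⟨w, hwe, hwf⟩) fun ⟨w, hwg, hwe⟩ => meg ⟨w, hwe, hwg⟩
    exact Or.inr (Or.inl ⟨x, hx, by simp [Realizes, cherryEdgePat, h₁, h₂, h₃, he, hf, hg]⟩)
  · obtain ⟨x, hx, h₁, h₂, h₃⟩ := exists_injective_matching₃ hed hfd hgd mef meg mfg
    exact Or.inr (Or.inr ⟨x, hx, by simp [Realizes, matchingPat₃, h₁, h₂, h₃, he, hf, hg]⟩)

end Shapes

section Classification

variable {t n : ℕ} {D : Finset (Finset (Sym2 (Fin n)))} {H : SimpleGraph (Fin n)}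
  {π : Perm (Fin n)}

theorem mapsSomeInto_memberTuples {D' : Finset (Finset (Sym2 (Fin n)))}
    {P : Finset (Sym2 (Fin n))} (hP : P ∈ D') {k : ℕ} {pat : Finset (Fin (k + 2) × Fin (k + 2))}
    (h01 : (0, 1) ∈ pat) (hcover : ∀ i, ∃ p ∈ pat, i = p.1 ∨ i = p.2) {x : Fin (k + 2) → Fin n}
    (hx : Injective x) (hxP : Realizes (H.edgeSet ∩ Sym2.map π ⁻¹' P) pat x) :
    MapsSomeInto (realizers H.edgeSet pat) (memberTuples D' k) π :=
  ⟨x, mem_realizers.2 (hxP.mono Set.inter_subset_left), hx, mem_memberTuples_of_realizes hP h01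
    hcover ((realizes_comp_iff _ _ _ _).2 (hxP.mono Set.inter_subset_right))⟩

theorem Atypical.mapsSomeInto (h : Atypical t D H π) :
    MapsSomeInto (realizers H.edgeSet cherryPat) (realizers ↑(nonCliqueEdges t D) cherryPat) π ∨
    MapsSomeInto (realizers H.edgeSet matchingPat₂)
      (memberTuples (D.filter fun P => ¬ IsKClique t P) 2) π ∨
    MapsSomeInto (realizers H.edgeSet starPat) (memberTuples (D.filter (IsKClique t)) 2) π ∨
    MapsSomeInto (realizers H.edgeSet pathPat) (memberTuples (D.filter (IsKClique t)) 2) π ∨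
    MapsSomeInto (realizers H.edgeSet cherryEdgePat) (memberTuples (D.filter (IsKClique t)) 3) π ∨
    MapsSomeInto (realizers H.edgeSet matchingPat₃)
      (memberTuples (D.filter (IsKClique t)) 4) π := by
  rcases h with ⟨P, hP, hPt, e, he, f, hf, hef, heP, hfP⟩ |
    ⟨P, hP, hPt, e, he, f, hf, g, hg, hef, heg, hfg, heP, hfP, hgP, hnt⟩
  · have hP' : P ∈ D.filter fun P => ¬ IsKClique t P := mem_filter.2 ⟨hP, hPt⟩
    rcases exists_realizes_of_two_edges (H.edgeSet ∩ Sym2.map π ⁻¹' P) ⟨he, heP⟩ ⟨hf, hfP⟩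
      (H.not_isDiag_of_mem_edgeSet he) (H.not_isDiag_of_mem_edgeSet hf) hef with
      ⟨x, hx, hxP⟩ | ⟨x, hx, hxP⟩
    · refine Or.inl ⟨x, mem_realizers.2 (hxP.mono Set.inter_subset_left), hx, mem_realizers.2 ?_⟩
      refine (realizes_comp_iff _ _ _ _).2 (hxP.mono fun e he => ?_)
      exact mem_coe.2 (mem_biUnion.2 ⟨P, hP', he.2⟩)
    · exact Or.inr (Or.inl (mapsSomeInto_memberTuples hP' (by decide) (by decide) hx hxP))
  · have hP' : P ∈ D.filter (IsKClique t) := mem_filter.2 ⟨hP, hPt⟩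
    rcases exists_realizes_of_three_edges (H.edgeSet ∩ Sym2.map π ⁻¹' P) ⟨he, heP⟩ ⟨hf, hfP⟩
      ⟨hg, hgP⟩ (H.not_isDiag_of_mem_edgeSet he) (H.not_isDiag_of_mem_edgeSet hf)
      (H.not_isDiag_of_mem_edgeSet hg) hef heg hfg hnt with
      ⟨x, hx, hxP | hxP⟩ | ⟨x, hx, hxP⟩ | ⟨x, hx, hxP⟩
    · exact Or.inr (Or.inr (Or.inl (mapsSomeInto_memberTuples hP' (by decide) (by decide) hx hxP)))
    · exact Or.inr (Or.inr (Or.inr (Or.inl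
        (mapsSomeInto_memberTuples hP' (by decide) (by decide) hx hxP))))
    · exact Or.inr (Or.inr (Or.inr (Or.inr (Or.inl
        (mapsSomeInto_memberTuples hP' (by decide) (by decide) hx hxP)))))
    · exact Or.inr (Or.inr (Or.inr (Or.inr (Or.inr
        (mapsSomeInto_memberTuples hP' (by decide) (by decide) hx hxP)))))

end Classification

theorem pow_le_two_mul_sub_pow {n m : ℕ} (h : 2 * m ^ 2 ≤ n) : n ^ m ≤ 2 * (n - m) ^ m := by
  rcases Nat.eq_zero_or_pos m with rfl | hm
  · simp
  have hmn : m ≤ n := by nlinarith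
  zify [hmn]
  have bernoulli := pow_add_mul_le_add_pow (a := (n : ℤ)) (b := -(m : ℤ)) (by positivity)
    (by omega) m
  obtain ⟨k, rfl⟩ := Nat.exists_eq_add_of_le' hm
  have : (2 * ((k + 1 : ℕ) : ℤ) ^ 2) * (n : ℤ) ^ k ≤ n * n ^ k := by
    gcongr; exact_mod_cast h
  simp only [add_tsub_cancel_right, ← sub_eq_add_neg] at bernoulli
  push_cast at bernoulli this ⊢
  nlinarith [pow_succ' (n : ℤ) k]

theorem pow_mul_factorial_sub_le {n m : ℕ} (h : 2 * m ^ 2 ≤ n) :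
    n ^ m * (n - (m + 1))! ≤ 2 * (n - 1)! := by
  rcases Nat.eq_zero_or_pos m with rfl | hm
  · simp [two_mul]
  have hmn : m ≤ n - 1 := by have : m ≤ m ^ 2 := Nat.le_self_pow two_ne_zero m; omega
  rw [← Nat.factorial_mul_descFactorial hmn, show n - 1 - m = n - (m + 1) by omega]
  calc n ^ m * (n - (m + 1))! ≤ 2 * (n - m) ^ m * (n - (m + 1))! := by
        gcongr; exact pow_le_two_mul_sub_pow h
    _ ≤ 2 * ((n - (m + 1))! * (n - 1).descFactorial m) := by
        rw [mul_comm _ (Nat.descFactorial _ _), ← mul_assoc]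
        gcongr
        exact (le_of_eq (by congr 1; omega)).trans (Nat.pow_sub_le_descFactorial (n - 1) m)

theorem atypical_coeff_le {t : ℕ} (ht : 3 ≤ t) :
    2 * ((3 * t - 5) ^ 2 + (3 * t - 5) * (2 * t - 1) ^ 2 + 2 * t ^ 2 + t ^ 3 + t ^ 4) ≤
      11 * t ^ 4 := by
  obtain ⟨s, rfl⟩ := Nat.exists_eq_add_of_le' ht
  rw [show 3 * (s + 3) - 5 = 3 * s + 4 by omega, show 2 * (s + 3) - 1 = 2 * s + 5 by omega]
  -- the added polynomial is the slack `11 t⁴ - 2 (⋯)` expanded in `s = t - 3`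
  calc _ ≤ 2 * ((3 * s + 4) ^ 2 + (3 * s + 4) * (2 * s + 5) ^ 2 + 2 * (s + 3) ^ 2 + (s + 3) ^ 3 +
          (s + 3) ^ 4) + (9 * s ^ 4 + 82 * s ^ 3 + 294 * s ^ 2 + 536 * s + 407) :=
        Nat.le_add_right _ _
    _ = 11 * (s + 3) ^ 4 := by ring

/-- The bounds `#X * #U * (n - k)!` for the six configuration types of `Atypical.mapsSomeInto`,
in that order. -/
def atypicalBound (t n d : ℕ) : ℕ :=
  n * d ^ 2 * (n * (3 * t - 5) ^ 2) * (n - 3)! +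
    ((n * d) ^ 2 * (n * (3 * t - 5) * (2 * t - 1) ^ 2) * (n - 4)! +
    (n * d ^ 3 * (n ^ 2 * t ^ 2) * (n - 4)! +
    (n * d ^ 3 * (n ^ 2 * t ^ 2) * (n - 4)! +
    (n ^ 2 * d ^ 3 * (n ^ 2 * t ^ 3) * (n - 5)! +
    (n * d) ^ 3 * (n ^ 2 * t ^ 4) * (n - 6)!))))

theorem atypicalBound_le {t n d : ℕ} (ht : 3 ≤ t) (hn : 11 * d ^ 3 * t ^ 4 < n) :
    atypicalBound t n d ≤ 11 * d ^ 3 * t ^ 4 * (n - 1)! := by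
  unfold atypicalBound
  rcases Nat.eq_zero_or_pos d with rfl | hd
  · simp
  have h81 : 81 ≤ d ^ 3 * t ^ 4 :=
    calc 81 = 1 * 3 ^ 4 := by norm_num
      _ ≤ d ^ 3 * t ^ 4 := Nat.mul_le_mul (Nat.one_le_pow _ _ hd) (Nat.pow_le_pow_left ht 4)
  have hn50 : 2 * 5 ^ 2 ≤ n := by rw [mul_assoc] at hn; omega
  have h₂ := pow_mul_factorial_sub_le (m := 2) (le_trans (by norm_num) hn50)
  have h₃ := pow_mul_factorial_sub_le (m := 3) (le_trans (by norm_num) hn50)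
  have h₄ := pow_mul_factorial_sub_le (m := 4) (le_trans (by norm_num) hn50)
  have h₅ := pow_mul_factorial_sub_le (m := 5) hn50
  have hd₂₃ : d ^ 2 ≤ d ^ 3 := Nat.pow_le_pow_right hd (by norm_num)
  set Δ := 3 * t - 5
  set L := (n - 1)!
  calc _ = d ^ 2 * Δ ^ 2 * (n ^ 2 * (n - (2 + 1))!) +
        d ^ 2 * (Δ * (2 * t - 1) ^ 2) * (n ^ 3 * (n - (3 + 1))!) +
        2 * d ^ 3 * t ^ 2 * (n ^ 3 * (n - (3 + 1))!) + d ^ 3 * t ^ 3 * (n ^ 4 * (n - (4 + 1))!) +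
        d ^ 3 * t ^ 4 * (n ^ 5 * (n - (5 + 1))!) := by ring
    _ ≤ d ^ 2 * Δ ^ 2 * (2 * L) + d ^ 2 * (Δ * (2 * t - 1) ^ 2) * (2 * L) +
        2 * d ^ 3 * t ^ 2 * (2 * L) + d ^ 3 * t ^ 3 * (2 * L) + d ^ 3 * t ^ 4 * (2 * L) := by
      gcongr
    _ = 2 * (d ^ 2 * (Δ ^ 2 + Δ * (2 * t - 1) ^ 2) + d ^ 3 * (2 * t ^ 2 + t ^ 3 + t ^ 4)) * L := by
      ring
    _ ≤ 2 * (d ^ 3 * (Δ ^ 2 + Δ * (2 * t - 1) ^ 2) + d ^ 3 * (2 * t ^ 2 + t ^ 3 + t ^ 4)) * L := by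
      gcongr
    _ = d ^ 3 * (2 * (Δ ^ 2 + Δ * (2 * t - 1) ^ 2 + 2 * t ^ 2 + t ^ 3 + t ^ 4)) * L := by ring
    _ ≤ d ^ 3 * (11 * t ^ 4) * L :=
      Nat.mul_le_mul_right L (Nat.mul_le_mul_left _ (atypical_coeff_le ht))
    _ = 11 * d ^ 3 * t ^ 4 * L := by ring

theorem card_filter_or_le {α : Type*} (s : Finset α) (p q : α → Prop) [DecidablePred p]
    [DecidablePred q] : #{a ∈ s | p a ∨ q a} ≤ #{a ∈ s | p a} + #{a ∈ s | q a} := by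
  rw [filter_or]; exact card_union_le _ _

section AtypicalCount

variable {t n d : ℕ} {D : Finset (Finset (Sym2 (Fin n)))} {H : SimpleGraph (Fin n)}

theorem card_mapsSomeInto_le_of_le {k a b : ℕ} {X U : Finset (Fin k → Fin n)} (hX : #X ≤ a)
    (hU : #U ≤ b) : #{π | MapsSomeInto X U π} ≤ a * b * (n - k)! :=
  (card_mapsSomeInto_le X U).trans (by rw [Fintype.card_fin]; gcongr)

theorem card_atypical_le (hD : IsAdjustedDecomp t n D) (ht : 3 ≤ t)
    (hH : ∀ v : Fin n, (H.neighborSet v).ncard ≤ d) :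
    #{π | Atypical t D H π} ≤ atypicalBound t n d := by
  have hH' : ∀ v, {w | s(v, w) ∈ H.edgeSet}.ncard ≤ d := hH
  have hKt := hD.1.card_memberTuples_clique_le (t := t)
  have hnKt := hD.card_memberTuples_nonClique_le ht
  unfold atypicalBound
  refine (card_le_card fun π hπ =>
    mem_filter.2 ⟨mem_univ π, (mem_filter.1 hπ).2.mapsSomeInto⟩).trans ?_
  refine (card_filter_or_le _ _ _).trans (add_le_add ?_ <| (card_filter_or_le _ _ _).trans <|
    add_le_add ?_ <| (card_filter_or_le _ _ _).trans <| add_le_add ?_ <|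
    (card_filter_or_le _ _ _).trans <| add_le_add ?_ <| (card_filter_or_le _ _ _).trans <|
    add_le_add ?_ ?_) <;> refine card_mapsSomeInto_le_of_le ?_ ?_
  · simpa using card_realizers_cherryPat_le hH'
  · simpa using card_realizers_cherryPat_le hD.ncard_nonCliqueEdges_nbr_le
  · simpa using card_realizers_matchingPat₂_le hH'
  · exact hnKt 2
  · simpa using card_realizers_starPat_le hH'
  · exact hKt 2
  · simpa using card_realizers_pathPat_le hH'
  · exact hKt 2
  · simpa using card_realizers_cherryEdgePat_le hH'
  · exact hKt 3
  · simpa using card_realizers_matchingPat₃_le hH'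
  · exact hKt 4

end AtypicalCount

theorem count_atypical_copies_general (t : ℕ) (ht : 3 ≤ t)
    (n : ℕ) (hnodd : Odd n)
    (D : Finset (Finset (Sym2 (Fin n)))) (hD : IsAdjustedDecomp t n D)
    (H : SimpleGraph (Fin n)) (d : ℕ) (hH : ∀ v : Fin n, (H.neighborSet v).ncard ≤ d) :
    Nat.card {π : Equiv.Perm (Fin n) // Atypical t D H π} ≤
      11 * d ^ 3 * t ^ 4 * (n - 1).factorial := by
  rw [Nat.card_eq_fintype_card, Fintype.card_subtype]
  rcases le_or_gt n (11 * d ^ 3 * t ^ 4) with hn | hn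
  · calc _ ≤ n ! := (card_filter_le _ _).trans_eq (by simp [Fintype.card_perm])
      _ = n * (n - 1)! := (Nat.mul_factorial_pred hnodd.pos.ne').symm
      _ ≤ _ := Nat.mul_le_mul_right _ hn
  · exact (card_atypical_le hD ht hH).trans (atypicalBound_le ht hn)

/-- Lemma 2.6: if `D` is an adjusted `t`-decomposition of `K_n`
(`t ≥ 3`, `t, n` odd) and `H` is a graph on `n` vertices of maximum degree at most `d`,
then at most `11·d³·t⁴·(n-1)!` of the `n!` labeled copies of `H` are atypical. -/
theorem count_atypical_copies (t : ℕ) (htodd : Odd t) (ht : 3 ≤ t)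
    (n : ℕ) (hnodd : Odd n)
    (D : Finset (Finset (Sym2 (Fin n)))) (hD : IsAdjustedDecomp t n D)
    (H : SimpleGraph (Fin n)) (d : ℕ) (hH : ∀ v : Fin n, (H.neighborSet v).ncard ≤ d) :
    Nat.card {π : Equiv.Perm (Fin n) // Atypical t D H π} ≤
      11 * d ^ 3 * t ^ 4 * (n - 1).factorial :=
  count_atypical_copies_general t ht n hnodd D hD H d hH
end

section
/- Let ε > 0, let k be a positive integer, and set γ = ε/(k²+1). If H is an (ε,k)-consistent orientation on n vertices, then f(H) ≤ k²n and c(H) + (3−γ)f(H) − i(H) − g(H) ≥ γn. -/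
open scoped Classical

/-- An *orientation* (`Orient`): a finite simple digraph on `Fin n` with no loops and
no directed cycles of length 2. -/
structure Orient (n : ℕ) where
  E : Fin n → Fin n → Prop
  asymm : ∀ u v, E u v → ¬ E v u

namespace Orient

variable {n : ℕ}

/-- Out-degree `d⁺(v)`. -/
noncomputable def outDeg (H : Orient n) (v : Fin n) : ℕ :=
  (Finset.univ.filter fun u => H.E v u).card

/-- In-degree `d⁻(v)`. -/
noncomputable def inDeg (H : Orient n) (v : Fin n) : ℕ :=
  (Finset.univ.filter fun u => H.E u v).card

/-- Number of (directed) edges `e(H)`. -/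
noncomputable def edgeCount (H : Orient n) : ℕ :=
  (Finset.univ.filter fun p : Fin n × Fin n => H.E p.1 p.2).card

/-- `Δ(H) ≤ k`: maximum degree of the underlying graph is at most `k`. -/
def maxDegLE (H : Orient n) (k : ℕ) : Prop :=
  ∀ v, H.outDeg v + H.inDeg v ≤ k

/-- `plus(H) = ∑ v, d⁺(v)·d⁻(v)`. -/
noncomputable def plus (H : Orient n) : ℕ :=
  ∑ v, H.outDeg v * H.inDeg v

/-- `minus(H) = ∑ v, (C(d⁺(v),2) + C(d⁻(v),2))`. -/
noncomputable def minus (H : Orient n) : ℕ :=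
  ∑ v, (Nat.choose (H.outDeg v) 2 + Nat.choose (H.inDeg v) 2)

/-- `(ε,k)`-consistent orientation. -/
def IsConsistent (ε : ℝ) (k : ℕ) (H : Orient n) : Prop :=
  H.maxDegLE k ∧ (H.plus : ℝ) - (H.minus : ℝ) ≥ ε * n

/-- A tournament: exactly one directed edge between any two distinct vertices. -/
def IsTournament (G : Orient n) : Prop :=
  ∀ u v : Fin n, u ≠ v → G.E u v ∨ G.E v u

/-- A regular tournament: every out-degree and in-degree equals `(n-1)/2`. -/
def IsRegularTournament (G : Orient n) : Prop :=
  G.IsTournament ∧ ∀ v, G.outDeg v = (n - 1) / 2 ∧ G.inDeg v = (n - 1) / 2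

/-- The number `G(H)` of labeled copies of `H` in `G`. -/
noncomputable def copies (H G : Orient n) : ℕ :=
  Nat.card {π : Equiv.Perm (Fin n) // ∀ u v, H.E u v → G.E (π u) (π v)}

/-- The underlying undirected graph `Ĥ`. -/
def underlying (H : Orient n) : SimpleGraph (Fin n) where
  Adj u v := H.E u v ∨ H.E v u
  symm := ⟨fun u v h => h.symm⟩
  loopless := ⟨fun v h => h.elim (fun h' => H.asymm v v h' h') (fun h' => H.asymm v v h' h')⟩

end Orient

namespace Orient

variable {n : ℕ}

/-- `c(H)`: the number of induced consistent pairs of edges, counted as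
directed paths `x → y → z` whose endpoints `x, z` are non-adjacent. -/
noncomputable def cCount (H : Orient n) : ℕ :=
  (Finset.univ.filter fun p : Fin n × Fin n × Fin n =>
    H.E p.1 p.2.1 ∧ H.E p.2.1 p.2.2 ∧ ¬ (H.E p.1 p.2.2 ∨ H.E p.2.2 p.1)).card

/-- `i(H)`: the number of induced inconsistent pairs of edges; each such pair
`{x→y, z→y}` or `{y→x, y→z}` (with `x, z` non-adjacent) is counted once via `x < z`. -/
noncomputable def iCount (H : Orient n) : ℕ :=
  (Finset.univ.filter fun p : Fin n × Fin n × Fin n =>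
    p.1 < p.2.2 ∧
    ((H.E p.1 p.2.1 ∧ H.E p.2.2 p.2.1) ∨ (H.E p.2.1 p.1 ∧ H.E p.2.1 p.2.2)) ∧
    ¬ (H.E p.1 p.2.2 ∨ H.E p.2.2 p.1)).card

/-- `f(H)`: the number of directed triangles `C₃`, each counted once via the
rotation starting at its smallest vertex. -/
noncomputable def fCount (H : Orient n) : ℕ :=
  (Finset.univ.filter fun p : Fin n × Fin n × Fin n =>
    p.1 < p.2.1 ∧ p.1 < p.2.2 ∧ H.E p.1 p.2.1 ∧ H.E p.2.1 p.2.2 ∧ H.E p.2.2 p.1).card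

/-- `g(H)`: the number of transitive triangles `T₃`, each counted once via its
(source, middle, sink) labeling. -/
noncomputable def gCount (H : Orient n) : ℕ :=
  (Finset.univ.filter fun p : Fin n × Fin n × Fin n =>
    H.E p.1 p.2.1 ∧ H.E p.2.1 p.2.2 ∧ H.E p.1 p.2.2).card

end Orient

/-! Classify the directed 2-paths `x → y → z`, of which there are `plus(H)`, by how `x` and `z`
are joined: not at all (`c`), by `x → z` (`g`), or by `z → x` (each directed triangle three
times); so `plus = c + g + 3f`. Likewise the inconsistent pairs at `y`, of which there are
`minus(H)`, are either induced (`i`) or span a transitive triangle with `y` as its sink or its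
source; so `minus = i + 2g`. Hence `c + 3f - i - g ≥ εn`. Finally `f ≤ plus ≤ k²n`, so trading
`γf ≤ γk²n` against `εn = γk²n + γn` gives the bound. -/

open Finset

theorem Finset.card_eq_mul_card_filter_of_existsUnique_pow {α : Type*} [DecidableEq α]
    (s : Finset α) (ρ : Equiv.Perm α) (hs : ∀ a ∈ s, ρ a ∈ s) (r : α → Prop) [DecidablePred r]
    {m : ℕ} (hr : ∀ a ∈ s, ∃! i : Fin m, r ((ρ ^ (i : ℕ)) a)) :
    #s = m * #{a ∈ s | r a} := by
  have hmem (i : ℕ) : ∀ a ∈ s, (ρ ^ i) a ∈ s := by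
    induction i with
    | zero => simp
    | succ i ih => simpa [pow_succ', Equiv.Perm.mul_apply] using fun a ha => hs _ (ih a ha)
  have hpow (i : ℕ) : s.map (ρ ^ i).toEmbedding = s :=
    map_eq_of_subset fun _ hb => by
      obtain ⟨a, ha, rfl⟩ := mem_map.mp hb
      exact hmem i a ha
  have hpiece (i : ℕ) : #{a ∈ s | r ((ρ ^ i) a)} = #{a ∈ s | r a} := by
    conv_rhs => rw [← hpow i, filter_map, card_map]
    rfl
  have hcover : s = univ.biUnion fun i : Fin m => {a ∈ s | r ((ρ ^ (i : ℕ)) a)} := by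
    ext a
    simp only [mem_biUnion, mem_univ, mem_filter, true_and]
    exact ⟨fun ha => ⟨_, ha, (hr a ha).exists.choose_spec⟩, fun ⟨_, ha, _⟩ => ha⟩
  have hdisj : (↑(univ : Finset (Fin m)) : Set (Fin m)).PairwiseDisjoint
      fun i : Fin m => {a ∈ s | r ((ρ ^ (i : ℕ)) a)} := by
    intro i _ j _ hij
    refine disjoint_filter.mpr fun a ha hi hj => hij ?_
    exact (hr a ha).unique hi hj
  calc #s = ∑ i : Fin m, #{a ∈ s | r ((ρ ^ (i : ℕ)) a)} := by rw [← card_biUnion hdisj, ← hcover]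
    _ = m * #{a ∈ s | r a} := by simp [hpiece]

theorem Finset.card_eq_two_mul_card_filter_of_perm {α : Type*} [DecidableEq α]
    (s : Finset α) (σ : Equiv.Perm α) (hs : ∀ a ∈ s, σ a ∈ s) (r : α → Prop) [DecidablePred r]
    (hr : ∀ a ∈ s, r (σ a) ↔ ¬ r a) :
    #s = 2 * #{a ∈ s | r a} := by
  refine s.card_eq_mul_card_filter_of_existsUnique_pow σ hs r fun a ha => ?_
  simp only [ExistsUnique, Fin.exists_fin_two, Fin.forall_fin_two, Fin.val_zero, Fin.val_one,
    pow_zero, pow_one, Equiv.Perm.one_apply]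
  by_cases h : r a <;> simp_all

theorem Finset.choose_two_card_eq_card_filter_lt {α : Type*} [LinearOrder α] (s : Finset α) :
    (#s).choose 2 = #{p ∈ s ×ˢ s | p.1 < p.2} := by
  have hdouble := s.offDiag.card_eq_two_mul_card_filter_of_perm (Equiv.prodComm α α)
    (by simp +contextual [eq_comm]) (fun p => p.1 < p.2) fun p hp => by
      have hne : p.1 ≠ p.2 := (mem_offDiag.mp hp).2.2
      exact ⟨fun h => h.not_gt, fun h => (not_lt.mp h).lt_of_ne hne.symm⟩
  have hfilter : {p ∈ s.offDiag | p.1 < p.2} = {p ∈ s ×ˢ s | p.1 < p.2} := by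
    ext p; simp only [mem_filter, mem_offDiag, mem_product]
    exact ⟨fun ⟨⟨h1, h2, _⟩, h⟩ => ⟨⟨h1, h2⟩, h⟩, fun ⟨⟨h1, h2⟩, h⟩ => ⟨⟨h1, h2, h.ne⟩, h⟩⟩
  rw [← hfilter, Nat.choose_two_right, Nat.mul_sub_one, ← offDiag_card, hdouble]
  simp

namespace Orient

variable {n : ℕ} (H : Orient n)

noncomputable def triples (P : Fin n → Fin n → Fin n → Prop) : Finset (Fin n × Fin n × Fin n) :=
  univ.filter fun p => P p.1 p.2.1 p.2.2

@[simp]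
lemma mem_triples {P : Fin n → Fin n → Fin n → Prop} {x y z : Fin n} :
    (x, y, z) ∈ triples P ↔ P x y z := by
  simp [triples]

lemma card_triples_eq_sum (P : Fin n → Fin n → Fin n → Prop) :
    #(triples P) = ∑ y, #{q : Fin n × Fin n | P q.1 y q.2} := by
  simp only [triples, card_filter, Fintype.sum_prod_type]
  exact sum_comm

lemma filter_triples (P : Fin n → Fin n → Fin n → Prop) (r : Fin n × Fin n × Fin n → Prop)
    [DecidablePred r] : {p ∈ triples P | r p} = triples fun x y z => P x y z ∧ r (x, y, z) := by
  ext; simp [triples]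

lemma card_triples_eq_add (P Q : Fin n → Fin n → Fin n → Prop) :
    #(triples P) = #(triples fun x y z => P x y z ∧ Q x y z)
      + #(triples fun x y z => P x y z ∧ ¬ Q x y z) := by
  rw [← filter_triples P fun p => Q p.1 p.2.1 p.2.2,
    ← filter_triples P fun p => ¬ Q p.1 p.2.1 p.2.2, card_filter_add_card_filter_not]

lemma ne_of_E {x y : Fin n} (h : H.E x y) : x ≠ y := by
  rintro rfl
  exact H.asymm x x h h

lemma card_paths : #(triples fun x y z => H.E x y ∧ H.E y z) = H.plus := by
  rw [card_triples_eq_sum, plus]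
  refine sum_congr rfl fun y _ => ?_
  rw [mul_comm, outDeg, inDeg, ← card_product]
  congr 1
  ext; simp

lemma card_inconsistent :
    #(triples fun x y z => x < z ∧ (H.E x y ∧ H.E z y ∨ H.E y x ∧ H.E y z)) = H.minus := by
  rw [card_triples_eq_sum, minus]
  refine sum_congr rfl fun y _ => ?_
  set In := univ.filter fun x => H.E x y
  set Out := univ.filter fun z => H.E y z
  have hdisj : Disjoint {q ∈ Out ×ˢ Out | q.1 < q.2} {q ∈ In ×ˢ In | q.1 < q.2} :=
    disjoint_filter_filter <| disjoint_product.mpr <| .inl <| disjoint_filter.mpr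
      fun x _ hout hin => H.asymm _ _ hout hin
  rw [outDeg, inDeg, choose_two_card_eq_card_filter_lt, choose_two_card_eq_card_filter_lt,
    ← card_union_of_disjoint hdisj]
  congr 1
  ext; simp [In, Out]; tauto

lemma card_cycles :
    #(triples fun x y z => H.E x y ∧ H.E y z ∧ H.E z x) = 3 * H.fCount := by
  let rotate : Equiv.Perm (Fin n × Fin n × Fin n) :=
    ⟨fun p => (p.2.1, p.2.2, p.1), fun p => (p.2.2, p.1, p.2.1), fun _ => rfl, fun _ => rfl⟩
  rw [card_eq_mul_card_filter_of_existsUnique_pow (m := 3) _ rotate ?closed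
    (fun p => p.1 < p.2.1 ∧ p.1 < p.2.2) ?unique, filter_triples]
  case closed =>
    rintro ⟨x, y, z⟩ h
    rw [mem_triples] at h
    exact mem_triples.mpr ⟨h.2.1, h.2.2, h.1⟩
  -- a directed triangle has exactly one rotation that starts at its least vertex
  case unique =>
    rintro ⟨x, y, z⟩ h
    rw [mem_triples] at h
    have := H.ne_of_E h.1; have := H.ne_of_E h.2.1; have := H.ne_of_E h.2.2
    simp only [ExistsUnique, Fin.exists_fin_succ, Fin.forall_fin_succ]
    simp [rotate, pow_succ]
    grind
  rw [fCount]
  congr 2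
  ext; simp [triples]; tauto

lemma card_lt_eq_card_E (Q : Fin n → Fin n → Fin n → Prop) (hQ : ∀ x y z, Q x y z → Q z y x)
    (hadj : ∀ x y z, Q x y z → H.E x z ∨ H.E z x) :
    #(triples fun x y z => Q x y z ∧ x < z) = #(triples fun x y z => Q x y z ∧ H.E x z) := by
  -- both sides are half of `#(triples Q)`, via the reversal `(x, y, z) ↦ (z, y, x)`
  let reverse : Equiv.Perm (Fin n × Fin n × Fin n) :=
    Function.Involutive.toPerm (fun p => (p.2.2, p.2.1, p.1)) fun _ => rfl
  have hclosed : ∀ p ∈ triples Q, reverse p ∈ triples Q := fun ⟨x, y, z⟩ h =>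
    mem_triples.mpr (hQ x y z (mem_triples.mp h))
  have hlt := card_eq_two_mul_card_filter_of_perm _ reverse hclosed (fun p => p.1 < p.2.2)
    fun ⟨x, y, z⟩ h => by
      have hxz : x ≠ z :=
        (hadj x y z (mem_triples.mp h)).elim H.ne_of_E fun h => (H.ne_of_E h).symm
      exact ⟨fun h => h.not_gt, fun h => (not_lt.mp h).lt_of_ne hxz.symm⟩
  have hE := card_eq_two_mul_card_filter_of_perm _ reverse hclosed (fun p => H.E p.1 p.2.2)
    fun ⟨x, y, z⟩ h =>
      ⟨H.asymm z x, (hadj x y z (mem_triples.mp h)).resolve_left⟩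
  rw [filter_triples] at hlt hE
  dsimp only at hlt hE
  omega

lemma card_adjacent_inPairs :
    #(triples fun x y z => (H.E x y ∧ H.E z y ∧ (H.E x z ∨ H.E z x)) ∧ x < z) = H.gCount := by
  rw [card_lt_eq_card_E _ _ (fun x y z h => ⟨h.2.1, h.1, h.2.2.symm⟩) fun x y z h => h.2.2]
  refine card_equiv (Function.Involutive.toPerm (fun p => (p.1, p.2.2, p.2.1)) fun _ => rfl)
    fun ⟨x, y, z⟩ => ?_
  simp [triples]
  tauto

lemma card_adjacent_outPairs :
    #(triples fun x y z => (H.E y x ∧ H.E y z ∧ (H.E x z ∨ H.E z x)) ∧ x < z) = H.gCount := by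
  rw [card_lt_eq_card_E _ _ (fun x y z h => ⟨h.2.1, h.1, h.2.2.symm⟩) fun x y z h => h.2.2]
  refine card_equiv (Function.Involutive.toPerm (fun p => (p.2.1, p.1, p.2.2)) fun _ => rfl)
    fun ⟨x, y, z⟩ => ?_
  simp [triples]
  tauto

lemma plus_eq : H.plus = H.cCount + H.gCount + 3 * H.fCount := by
  rw [← card_paths, ← card_cycles, card_triples_eq_add _ fun x _ z => H.E x z,
    card_triples_eq_add (fun x y z => (H.E x y ∧ H.E y z) ∧ ¬ H.E x z) fun x _ z => H.E z x]
  have hg : #(triples fun x y z => (H.E x y ∧ H.E y z) ∧ H.E x z) = H.gCount := by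
    rw [gCount]; congr 1; ext; simp [triples, and_assoc]
  have hf : #(triples fun x y z => ((H.E x y ∧ H.E y z) ∧ ¬ H.E x z) ∧ H.E z x)
      = #(triples fun x y z => H.E x y ∧ H.E y z ∧ H.E z x) := by
    congr 1
    ext ⟨x, y, z⟩
    simp only [mem_triples]
    exact ⟨fun h => ⟨h.1.1.1, h.1.1.2, h.2⟩, fun h => ⟨⟨⟨h.1, h.2.1⟩, H.asymm _ _ h.2.2⟩, h.2.2⟩⟩
  have hc : #(triples fun x y z => ((H.E x y ∧ H.E y z) ∧ ¬ H.E x z) ∧ ¬ H.E z x) = H.cCount := by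
    rw [cCount]; congr 1; ext; simp [triples]; tauto
  rw [hg, hf, hc]
  ring

lemma minus_eq : H.minus = H.iCount + 2 * H.gCount := by
  rw [← card_inconsistent, card_triples_eq_add _ fun x _ z => H.E x z ∨ H.E z x,
    card_triples_eq_add
      (fun x y z => (x < z ∧ (H.E x y ∧ H.E z y ∨ H.E y x ∧ H.E y z)) ∧ (H.E x z ∨ H.E z x))
      fun x y _ => H.E x y]
  have hin : #(triples fun x y z =>
      ((x < z ∧ (H.E x y ∧ H.E z y ∨ H.E y x ∧ H.E y z)) ∧ (H.E x z ∨ H.E z x)) ∧ H.E x y)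
      = H.gCount := by
    rw [← card_adjacent_inPairs]
    congr 1
    ext ⟨x, y, z⟩
    simp only [mem_triples]
    have := H.asymm x y
    tauto
  have hout : #(triples fun x y z =>
      ((x < z ∧ (H.E x y ∧ H.E z y ∨ H.E y x ∧ H.E y z)) ∧ (H.E x z ∨ H.E z x)) ∧ ¬ H.E x y)
      = H.gCount := by
    rw [← card_adjacent_outPairs]
    congr 1
    ext ⟨x, y, z⟩
    simp only [mem_triples]
    have := H.asymm y x
    tauto
  have hi : #(triples fun x y z =>
      (x < z ∧ (H.E x y ∧ H.E z y ∨ H.E y x ∧ H.E y z)) ∧ ¬ (H.E x z ∨ H.E z x)) = H.iCount := by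
    rw [iCount]; congr 1; ext; simp only [triples, mem_filter, and_assoc]
  rw [hin, hout, hi]
  ring

lemma fCount_le_plus : H.fCount ≤ H.plus := by
  rw [← card_paths, fCount]
  exact card_le_card fun p hp => by simp_all [triples]

lemma plus_le_of_maxDegLE {k : ℕ} (hdeg : H.maxDegLE k) : H.plus ≤ k ^ 2 * n := by
  calc H.plus ≤ ∑ _v : Fin n, k * k :=
        sum_le_sum fun v _ =>
          Nat.mul_le_mul (le_of_add_le_left (hdeg v)) (le_of_add_le_right (hdeg v))
    _ = k ^ 2 * n := by simp [sq, mul_comm]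

end Orient

theorem consistent_orientation_triangle_bound_general
    (ε : ℝ) (hε : 0 < ε) (k : ℕ) (n : ℕ) (H : Orient n)
    (hH : H.IsConsistent ε k) :
    H.fCount ≤ k ^ 2 * n ∧
    (H.cCount : ℝ) + (3 - ε / ((k : ℝ) ^ 2 + 1)) * (H.fCount : ℝ)
        - (H.iCount : ℝ) - (H.gCount : ℝ) ≥ (ε / ((k : ℝ) ^ 2 + 1)) * n := by
  obtain ⟨hdeg, hplus_minus⟩ := hH
  have hf : H.fCount ≤ k ^ 2 * n := H.fCount_le_plus.trans (H.plus_le_of_maxDegLE hdeg)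
  refine ⟨hf, ?_⟩
  have hkey : (H.cCount : ℝ) + 3 * H.fCount - H.iCount - H.gCount ≥ ε * n := by
    rw [H.plus_eq, H.minus_eq] at hplus_minus
    push_cast at hplus_minus
    linarith
  set γ := ε / ((k : ℝ) ^ 2 + 1)
  have hγ : γ * ((k : ℝ) ^ 2 + 1) = ε := div_mul_cancel₀ ε (by positivity)
  have hγf : γ * H.fCount ≤ γ * ((k : ℝ) ^ 2 * n) :=
    mul_le_mul_of_nonneg_left (by exact_mod_cast hf) (by positivity)
  have hεn : ε * n = γ * ((k : ℝ) ^ 2 * n) + γ * n := by rw [← hγ]; ring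
  linarith

/-- Lemma 3.2, computation: let `γ = ε/(k²+1)`. Every
`(ε,k)`-consistent orientation `H` on `n` vertices has `f(H) ≤ k²n` and
`c(H) + (3-γ)f(H) - i(H) - g(H) ≥ γn`. -/
theorem consistent_orientation_triangle_bound
    (ε : ℝ) (hε : 0 < ε) (k : ℕ) (hk : 1 ≤ k) (n : ℕ) (H : Orient n)
    (hH : H.IsConsistent ε k) :
    H.fCount ≤ k ^ 2 * n ∧
    (H.cCount : ℝ) + (3 - ε / ((k : ℝ) ^ 2 + 1)) * (H.fCount : ℝ)
        - (H.iCount : ℝ) - (H.gCount : ℝ) ≥ (ε / ((k : ℝ) ^ 2 + 1)) * n :=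
  consistent_orientation_triangle_bound_general ε hε k n H hH
end

section
/- Let t ≥ 3 be odd and let n be odd and sufficiently large as a function of t. Let D be an adjusted t-decomposition of K_n, let H be a graph on n vertices, and let e and f be two edges of H sharing a common vertex. For a uniformly random bijection π from V(H) to the vertex set of K_n, let p be the probability that the images π(e) and π(f) lie in (the edge set of) the same member of D. Then |p − (t−2)/(n−2)| ≤ 3t²/n². -/
open scoped Classical

/-!
Write `e = va`, `f = vb`. The images `π(e)`, `π(f)` lie in a common member `P` exactly when
`(π v, π a, π b)` is a cherry of `P`: a triple `(x, y, z)` with `y ≠ z` and `xy, xz ∈ P`.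
Each triple of distinct vertices is the image of `(v, a, b)` under exactly `(n-3)!` permutations, so
`p = Σ_P c(P) / (n(n-1)(n-2))`, where `c(P)` counts cherries and `a(P)` counts ordered edges
(arcs) of `P`. Every ordered pair of distinct vertices is an arc of exactly one member, so
`Σ_P a(P) = n(n-1)`, and a copy of `K_k` has `c = (k-2)a`. Hence
`p - (t-2)/(n-2) = Σ_P (c(P) - (t-2)a(P)) / (n(n-1)(n-2))`, where only the members other than
copies of `K_t` contribute: at most `n(t-3)/6` triangles, each contributing `6(t-3)` in absolute
value, and `O(t)` members of bounded size contributing `O(t⁴)` in total.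
-/

open Finset Equiv
open scoped Nat

section Perm

variable {α : Type*} [Fintype α] [DecidableEq α]

lemma card_perm_fixing_of_injective {ι : Type*} [Fintype ι] {f : ι → α} (hf : f.Injective) :
    #{π : Perm α | ∀ i, π (f i) = f i} = (Fintype.card α - Fintype.card ι)! := by
  let s : Finset α := univ.image f
  have hcard : Fintype.card {x // x ∉ s} = Fintype.card α - Fintype.card ι := by
    rw [Fintype.card_subtype_compl, Fintype.card_coe, card_image_of_injective _ hf,
      Finset.card_univ]
  have e : {π : Perm α // ∀ i, π (f i) = f i} ≃ Perm {x // x ∉ s} :=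
    (Equiv.subtypeEquivRight fun π => by simp [s]).trans
      (Perm.subtypeEquivSubtypePerm (· ∉ s)).symm
  rw [← Fintype.card_subtype, Fintype.card_congr e, Fintype.card_perm, hcard]

lemma card_perm_extending {ι : Type*} [Fintype ι] {f g : ι → α} (hf : f.Injective)
    (hg : g.Injective) :
    #{π : Perm α | ∀ i, π (f i) = g i} = (Fintype.card α - Fintype.card ι)! := by
  obtain ⟨σ, hσ⟩ := Perm.exists_extending_pair f g hf hg
  rw [← card_perm_fixing_of_injective hf]
  refine card_bij' (fun π _ => σ⁻¹ * π) (fun π _ => σ * π) ?_ ?_ (by simp) (by simp)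
  · simp +contextual [← hσ, Perm.inv_def]
  · simp +contextual [hσ]

lemma card_perm_triple_mem {T : Finset (α × α × α)}
    (hT : ∀ x y z, (x, y, z) ∈ T → x ≠ y ∧ x ≠ z ∧ y ≠ z) {v a b : α}
    (hva : v ≠ a) (hvb : v ≠ b) (hab : a ≠ b) :
    #{π : Perm α | (π v, π a, π b) ∈ T} = #T * (Fintype.card α - 3)! := by
  rw [card_eq_sum_card_fiberwise (s := {π : Perm α | (π v, π a, π b) ∈ T})
    (f := fun π => (π v, π a, π b)) fun π hπ => (mem_filter.1 hπ).2]
  refine sum_const_nat fun ⟨x, y, z⟩ hxyz => ?_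
  obtain ⟨hxy, hxz, hyz⟩ := hT x y z hxyz
  convert card_perm_extending (f := ![v, a, b]) (g := ![x, y, z])
    (Fin.cons_injective_iff.2 ⟨by simp [*], by simp [*]⟩)
    (Fin.cons_injective_iff.2 ⟨by simp [*], by simp [*]⟩) using 2
  · ext π
    simp +contextual [Fin.forall_fin_succ, hxyz]
  · rw [Fintype.card_fin]

end Perm

section Cherries

variable {α : Type*} [Fintype α] [DecidableEq α]

def arcs (P : Finset (Sym2 α)) : Finset (α × α) :=
  {p | s(p.1, p.2) ∈ P}

def cherries (P : Finset (Sym2 α)) : Finset (α × α × α) :=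
  {p | p.2.1 ≠ p.2.2 ∧ s(p.1, p.2.1) ∈ P ∧ s(p.1, p.2.2) ∈ P}

@[simp] lemma mem_arcs {P : Finset (Sym2 α)} {x y : α} : (x, y) ∈ arcs P ↔ s(x, y) ∈ P := by
  simp [arcs]

@[simp] lemma mem_cherries {P : Finset (Sym2 α)} {x y z : α} :
    (x, y, z) ∈ cherries P ↔ y ≠ z ∧ s(x, y) ∈ P ∧ s(x, z) ∈ P := by
  simp [cherries]

lemma card_arcs_le (P : Finset (Sym2 α)) : #(arcs P) ≤ 2 * #P := by
  refine card_le_mul_card_image_of_maps_to (f := fun p => s(p.1, p.2))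
    (fun p hp => mem_arcs.1 hp) 2 fun e _ => ?_
  induction e using Sym2.ind with
  | h x y =>
    refine (card_le_card fun p hp => ?_).trans (card_le_two (a := (x, y)) (b := (y, x)))
    obtain ⟨p₁, p₂⟩ := p
    aesop

lemma card_cherries_le_sq (P : Finset (Sym2 α)) : #(cherries P) ≤ #(arcs P) ^ 2 := by
  rw [sq, ← card_product]
  refine card_le_card_of_injOn (fun p => ((p.1, p.2.1), (p.1, p.2.2))) ?_ ?_
  · rintro ⟨x, y, z⟩ h
    simp_all
  · rintro ⟨x, y, z⟩ - ⟨x', y', z'⟩ - h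
    simp_all

lemma disjoint_arcs {P Q : Finset (Sym2 α)} (h : Disjoint P Q) : Disjoint (arcs P) (arcs Q) :=
  disjoint_left.2 fun ⟨_, _⟩ hP hQ => disjoint_left.1 h (mem_arcs.1 hP) (mem_arcs.1 hQ)

lemma disjoint_cherries {P Q : Finset (Sym2 α)} (h : Disjoint P Q) :
    Disjoint (cherries P) (cherries Q) :=
  disjoint_left.2 fun ⟨_, _, _⟩ hP hQ =>
    disjoint_left.1 h (mem_cherries.1 hP).2.1 (mem_cherries.1 hQ).2.1

lemma ne_of_mem_cherries {P : Finset (Sym2 α)} (hP : ∀ e ∈ P, ¬ e.IsDiag) {x y z : α}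
    (h : (x, y, z) ∈ cherries P) : x ≠ y ∧ x ≠ z ∧ y ≠ z := by
  rw [mem_cherries] at h
  exact ⟨fun hxy => hP _ h.2.1 (by simp [hxy]), fun hxz => hP _ h.2.2 (by simp [hxz]), h.1⟩

noncomputable def cherryDefect (t : ℕ) (P : Finset (Sym2 α)) : ℝ :=
  #(cherries P) - ((t : ℝ) - 2) * #(arcs P)

lemma abs_cherryDefect_le {t : ℕ} (ht : 2 ≤ t) (P : Finset (Sym2 α)) :
    |cherryDefect t P| ≤ #(arcs P) * (#(arcs P) + t) := by
  have hc : (#(cherries P) : ℝ) ≤ #(arcs P) ^ 2 := by exact_mod_cast card_cherries_le_sq P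
  have ht' : (2 : ℝ) ≤ t := by exact_mod_cast ht
  rw [cherryDefect, abs_le]
  constructor <;>
    nlinarith [(#(cherries P)).cast_nonneg (α := ℝ), (#(arcs P)).cast_nonneg (α := ℝ)]

end Cherries

section Cliques

variable {n : ℕ}

lemma arcs_cliqueEdges (s : Finset (Fin n)) : arcs (cliqueEdges s) = s.offDiag := by
  ext ⟨x, y⟩
  simp only [cliqueEdges, mem_arcs, mem_filter, mem_univ, Sym2.mk_isDiag_iff, Sym2.mem_iff,
    forall_eq_or_imp, forall_eq, true_and, mem_offDiag]
  tauto

lemma card_arcs_cliqueEdges (s : Finset (Fin n)) :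
    #(arcs (cliqueEdges s)) = #s * (#s - 1) := by
  rw [arcs_cliqueEdges, offDiag_card, Nat.mul_sub_one]

lemma cherries_cliqueEdges (s : Finset (Fin n)) :
    cherries (cliqueEdges s) = s.biUnion fun x => {x} ×ˢ (s.erase x).offDiag := by
  ext ⟨x, y, z⟩
  simp only [cliqueEdges, mem_cherries, mem_filter, mem_univ, Sym2.mk_isDiag_iff, Sym2.mem_iff,
    forall_eq_or_imp, forall_eq, true_and, singleton_product, mem_biUnion, mem_map, mem_offDiag,
    mem_erase, Function.Embedding.coeFn_mk, Prod.mk.injEq, exists_eq_right_right]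
  grind

lemma card_cherries_cliqueEdges (s : Finset (Fin n)) :
    #(cherries (cliqueEdges s)) = #s * (#s - 1) * (#s - 2) := by
  rw [cherries_cliqueEdges, card_biUnion, mul_assoc]
  · refine sum_const_nat fun x hx => ?_
    rw [card_product, card_singleton, one_mul, offDiag_card, card_erase_of_mem hx,
      ← Nat.mul_sub_one, Nat.sub_sub]
  · intro x _ y _ hxy
    refine disjoint_left.2 fun p hx hy => hxy ?_
    rw [mem_product, mem_singleton] at hx hy
    exact hx.1.symm.trans hy.1

lemma cherryDefect_cliqueEdges (t : ℕ) (s : Finset (Fin n)) :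
    cherryDefect t (cliqueEdges s) = #s * (#s - 1) * (#s - t : ℝ) := by
  rw [cherryDefect, card_cherries_cliqueEdges, card_arcs_cliqueEdges]
  generalize #s = k
  rcases k with _ | _ | k
  · simp
  · simp
  · push_cast [Nat.add_sub_cancel]
    ring

end Cliques

namespace IsDecompKn

variable {n : ℕ} {D : Finset (Finset (Sym2 (Fin n)))}

lemma pairwiseDisjoint_s19 (hD : IsDecompKn n D) :
    (D : Set (Finset (Sym2 (Fin n)))).PairwiseDisjoint id := by
  intro P hP Q hQ hPQ
  refine disjoint_left.2 fun e heP heQ => hPQ ?_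
  obtain ⟨R, -, hR⟩ := hD.2 e ((hD.1 P hP).2 e heP)
  exact (hR P ⟨hP, heP⟩).trans (hR Q ⟨hQ, heQ⟩).symm

lemma biUnion_arcs (hD : IsDecompKn n D) : D.biUnion arcs = (univ : Finset (Fin n)).offDiag := by
  ext ⟨x, y⟩
  simp only [mem_biUnion, mem_arcs, mem_offDiag, mem_univ, true_and]
  constructor
  · rintro ⟨P, hP, h⟩ rfl
    exact (hD.1 P hP).2 _ h (Sym2.mk_isDiag_iff.2 rfl)
  · intro hxy
    obtain ⟨P, ⟨hP, h⟩, -⟩ := hD.2 s(x, y) (by simpa)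
    exact ⟨P, hP, h⟩

lemma sum_card_arcs (hD : IsDecompKn n D) : ∑ P ∈ D, #(arcs P) = n * (n - 1) := by
  rw [← card_biUnion (t := arcs) fun P hP Q hQ h => disjoint_arcs (hD.pairwiseDisjoint_s19 hP hQ h),
    hD.biUnion_arcs, offDiag_card, Finset.card_univ, Fintype.card_fin, Nat.mul_sub_one]

lemma sum_cherryDefect (hD : IsDecompKn n D) (t : ℕ) :
    ∑ P ∈ D, cherryDefect t P
      = ((∑ P ∈ D, #(cherries P) : ℕ) : ℝ) - (t - 2) * ((n * (n - 1) : ℕ) : ℝ) := by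
  simp only [cherryDefect, sum_sub_distrib, ← mul_sum, ← hD.sum_card_arcs, Nat.cast_sum]

lemma card_perm_sameMember (hD : IsDecompKn n D) {v a b : Fin n}
    (hva : v ≠ a) (hvb : v ≠ b) (hab : a ≠ b) :
    Nat.card {π : Perm (Fin n) //
        ∃ P ∈ D, Sym2.map π s(v, a) ∈ P ∧ Sym2.map π s(v, b) ∈ P}
      = (∑ P ∈ D, #(cherries P)) * (n - 3)! := by
  have hT : ∀ x y z, (x, y, z) ∈ D.biUnion cherries → x ≠ y ∧ x ≠ z ∧ y ≠ z := by
    intro x y z h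
    obtain ⟨P, hP, h⟩ := mem_biUnion.1 h
    exact ne_of_mem_cherries (hD.1 P hP).2 h
  have hcount := card_perm_triple_mem hT hva hvb hab
  rw [Fintype.card_fin] at hcount
  rw [← card_biUnion (t := cherries)
      fun P hP Q hQ h => disjoint_cherries (hD.pairwiseDisjoint_s19 hP hQ h),
    ← hcount, Nat.card_eq_fintype_card, Fintype.card_subtype]
  congr 1
  ext π
  rw [Finset.mem_filter]
  simp [hab]

end IsDecompKn

section Adjusted

variable {t n : ℕ} {P : Finset (Sym2 (Fin n))}

lemma abs_cherryDefect_of_isKClique_three (ht : 3 ≤ t) (h : IsKClique 3 P) :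
    |cherryDefect t P| = 6 * (t - 3 : ℝ) := by
  obtain ⟨s, hs, rfl⟩ := h
  have ht' : (3 : ℝ) ≤ t := by exact_mod_cast ht
  rw [cherryDefect_cliqueEdges, hs, abs_of_nonpos (by push_cast; nlinarith)]
  push_cast
  ring

lemma abs_cherryDefect_of_isC4 (ht : 2 ≤ t) (h : IsC4 P) :
    |cherryDefect t P| ≤ 8 * (8 + t) := by
  have harcs : #(arcs P) ≤ 8 := by
    obtain ⟨a, b, c, d, -, rfl⟩ := h
    have := card_le_four (a := s(a, b)) (b := s(b, c)) (c := s(c, d)) (d := s(d, a))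
    have := card_arcs_le {s(a, b), s(b, c), s(c, d), s(d, a)}
    omega
  have harcs' : (#(arcs P) : ℝ) ≤ 8 := by exact_mod_cast harcs
  refine (abs_cherryDefect_le ht P).trans ?_
  gcongr

lemma abs_cherryDefect_of_isKClique_two_mul_sub_one (ht : 1 ≤ t) (h : IsKClique (2 * t - 1) P) :
    |cherryDefect t P| ≤ 4 * t ^ 3 := by
  obtain ⟨s, hs, rfl⟩ := h
  have ht' : (1 : ℝ) ≤ t := by exact_mod_cast ht
  rw [cherryDefect_cliqueEdges, hs, Nat.cast_sub (by omega)]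
  push_cast
  rw [abs_of_nonneg (mul_nonneg (mul_nonneg (by linarith) (by linarith)) (by linarith))]
  nlinarith

end Adjusted

lemma IsAdjustedDecomp.abs_sum_cherryDefect_le {t n : ℕ} {D : Finset (Finset (Sym2 (Fin n)))}
    (hD : IsAdjustedDecomp t n D) (ht : 3 ≤ t) :
    |∑ P ∈ D, cherryDefect t P| ≤ n * ((t : ℝ) - 3) ^ 2 + 8 * (t : ℝ) ^ 4 := by
  obtain ⟨-, hclass, -, htri, hc4, hbig⟩ := hD
  have ht' : (3 : ℝ) ≤ t := by exact_mod_cast ht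
  set B := D.filter (¬ IsKClique t ·)
  have hbound : ∀ P ∈ B, |cherryDefect t P| ≤
      (if IsKClique 3 P then 6 * ((t : ℝ) - 3) else 0)
        + (if IsC4 P then 8 * (8 + (t : ℝ)) else 0)
        + (if IsKClique (2 * t - 1) P then 4 * (t : ℝ) ^ 3 else 0) := by
    intro P hP
    obtain ⟨hPD, hPt⟩ := mem_filter.1 hP
    have h₃ : 0 ≤ (if IsKClique 3 P then 6 * ((t : ℝ) - 3) else 0) := by
      split_ifs <;> linarith
    have h₄ : 0 ≤ (if IsC4 P then 8 * (8 + (t : ℝ)) else 0) := by positivity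
    have h₅ : 0 ≤ (if IsKClique (2 * t - 1) P then 4 * (t : ℝ) ^ 3 else 0) := by positivity
    rcases hclass P hPD with h | h | h | h
    · exact absurd h hPt
    · rw [if_pos h] at h₃ ⊢
      linarith [abs_cherryDefect_of_isKClique_three ht h]
    · rw [if_pos h] at h₄ ⊢
      linarith [abs_cherryDefect_of_isC4 (t := t) (by omega) h]
    · rw [if_pos h] at h₅ ⊢
      linarith [abs_cherryDefect_of_isKClique_two_mul_sub_one (by omega) h]
  have htri' := (Nat.cast_le (α := ℝ)).2 htri
  have hc4' := (Nat.cast_le (α := ℝ)).2 hc4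
  have hbig' := (Nat.cast_le (α := ℝ)).2 hbig
  push_cast [Nat.cast_sub ht, Nat.cast_sub (by omega : 1 ≤ t)] at htri' hc4' hbig'
  have hKt : ∑ P ∈ D.filter (IsKClique t ·), cherryDefect t P = 0 := sum_eq_zero fun P hP => by
    obtain ⟨s, hs, rfl⟩ := (mem_filter.1 hP).2
    rw [cherryDefect_cliqueEdges, hs, sub_self, mul_zero]
  calc |∑ P ∈ D, cherryDefect t P| = |∑ P ∈ B, cherryDefect t P| := by
        rw [← sum_filter_add_sum_filter_not D (IsKClique t ·), hKt, zero_add]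
    _ ≤ ∑ P ∈ B, |cherryDefect t P| := abs_sum_le_sum_abs _ _
    _ ≤ _ := sum_le_sum hbound
    _ = #(D.filter fun P => ¬ IsKClique t P ∧ IsKClique 3 P) * (6 * ((t : ℝ) - 3))
        + #(D.filter fun P => ¬ IsKClique t P ∧ IsC4 P) * (8 * (8 + (t : ℝ)))
        + #(D.filter fun P => ¬ IsKClique t P ∧ IsKClique (2 * t - 1) P)
          * (4 * (t : ℝ) ^ 3) := by
      simp only [sum_add_distrib, ← sum_filter, sum_const, nsmul_eq_mul, B, filter_filter]
    _ ≤ n * ((t : ℝ) - 3) ^ 2 + 8 * (t : ℝ) ^ 4 := by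
      have ht₀ : (0 : ℝ) ≤ t - 3 := by linarith
      nlinarith [mul_le_mul_of_nonneg_right htri' ht₀,
        mul_le_mul_of_nonneg_right hc4' (by positivity : (0 : ℝ) ≤ 8 * (8 + t)),
        mul_le_mul_of_nonneg_right hbig' (by positivity : (0 : ℝ) ≤ 4 * t ^ 3)]

lemma abs_mul_factorial_div_factorial_sub_le {t n : ℕ} {S : ℝ} (ht : 3 ≤ t)
    (hn : 16 * t ^ 2 ≤ n)
    (hS : |S - (t - 2) * ((n * (n - 1) : ℕ) : ℝ)|
      ≤ n * ((t : ℝ) - 3) ^ 2 + 8 * (t : ℝ) ^ 4) :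
    |S * (n - 3)! / (n ! : ℝ) - ((t : ℝ) - 2) / ((n : ℝ) - 2)|
      ≤ 3 * (t : ℝ) ^ 2 / (n : ℝ) ^ 2 := by
  have h3n : 3 ≤ n := le_trans (by nlinarith) hn
  obtain ⟨m, rfl⟩ : ∃ m, n = m + 3 := ⟨n - 3, by omega⟩
  have hfac : ((m + 3)! : ℝ) = (m + 3) * (m + 2) * (m + 1) * m ! := by
    push_cast [Nat.factorial_succ]
    ring
  have hm : (m : ℝ) + 3 - 2 = m + 1 := by ring
  rw [Nat.add_sub_cancel, hfac]
  push_cast at hS ⊢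
  rw [hm]
  have hden : (0 : ℝ) < (m + 3) * (m + 2) * (m + 1) := by positivity
  have hsplit : S * m ! / ((m + 3) * (m + 2) * (m + 1) * m !) - (t - 2) / (m + 1)
      = (S - (t - 2) * ((m + 3) * (m + 2))) / ((m + 3) * (m + 2) * (m + 1)) := by
    field_simp
  rw [hsplit, abs_div, abs_of_pos hden, div_le_div_iff₀ hden (by positivity)]
  set N : ℝ := m + 3 with hN
  have ht' : (3 : ℝ) ≤ t := by exact_mod_cast ht
  have hn' : 16 * (t : ℝ) ^ 2 ≤ N := by rw [hN]; exact_mod_cast hn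
  have hsq : ((t : ℝ) - 3) ^ 2 ≤ t ^ 2 := by nlinarith
  calc |S - (t - 2) * (N * (m + 2))| * N ^ 2 ≤ (N * ((t : ℝ) - 3) ^ 2 + 8 * t ^ 4) * N ^ 2 := by
        gcongr
    _ ≤ 3 * t ^ 2 * (N * (m + 2) * (m + 1)) := by
        -- with `(t-3)² ≤ t²` this reduces to `t² N (2N - 9 - 8t²) ≥ 0`
        nlinarith [mul_nonneg (mul_nonneg (sq_nonneg (t : ℝ)) (by positivity : (0 : ℝ) ≤ N))
          (by nlinarith : (0 : ℝ) ≤ 2 * N - 9 - 8 * t ^ 2),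
          mul_le_mul_of_nonneg_left hsq (by positivity : (0 : ℝ) ≤ N ^ 3)]

theorem prob_same_member_close_general (t : ℕ) (ht : 3 ≤ t) :
    ∃ N : ℕ, ∀ n : ℕ, Odd n → n > N →
      ∀ D : Finset (Finset (Sym2 (Fin n))), IsAdjustedDecomp t n D →
      ∀ H : SimpleGraph (Fin n), ∀ e ∈ H.edgeSet, ∀ f ∈ H.edgeSet, e ≠ f →
      (∃ v : Fin n, v ∈ e ∧ v ∈ f) →
      |(Nat.card {π : Equiv.Perm (Fin n) //
            ∃ P ∈ D, Sym2.map π e ∈ P ∧ Sym2.map π f ∈ P} : ℝ) / (n.factorial : ℝ)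
          - ((t : ℝ) - 2) / ((n : ℝ) - 2)|
        ≤ 3 * (t : ℝ) ^ 2 / (n : ℝ) ^ 2 := by
  refine ⟨16 * t ^ 2, fun n _ hn D hD H e he f hf hef ⟨v, hve, hvf⟩ => ?_⟩
  obtain ⟨a, rfl⟩ := Sym2.mem_iff_exists.1 hve
  obtain ⟨b, rfl⟩ := Sym2.mem_iff_exists.1 hvf
  have hab : a ≠ b := by rintro rfl; exact hef rfl
  rw [hD.1.card_perm_sameMember (H.ne_of_adj he) (H.ne_of_adj hf) hab, Nat.cast_mul]
  refine abs_mul_factorial_div_factorial_sub_le ht hn.le ?_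
  rw [← hD.1.sum_cherryDefect]
  exact hD.abs_sum_cherryDefect_le ht

/-- Claim 3.4: let `t ≥ 3` be odd and `n` odd and sufficiently large,
let `D` be an adjusted `t`-decomposition of `K_n`, let `H` be a graph on `n` vertices and
let `e, f` be two distinct edges of `H` sharing a vertex. The probability `p` that a
uniformly random bijection of the vertices places the images of `e` and `f` inside the
same member of `D` satisfies `|p - (t-2)/(n-2)| ≤ 3t²/n²`. -/
theorem prob_same_member_close (t : ℕ) (htodd : Odd t) (ht : 3 ≤ t) :
    ∃ N : ℕ, ∀ n : ℕ, Odd n → n > N →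
      ∀ D : Finset (Finset (Sym2 (Fin n))), IsAdjustedDecomp t n D →
      ∀ H : SimpleGraph (Fin n), ∀ e ∈ H.edgeSet, ∀ f ∈ H.edgeSet, e ≠ f →
      (∃ v : Fin n, v ∈ e ∧ v ∈ f) →
      |(Nat.card {π : Equiv.Perm (Fin n) //
            ∃ P ∈ D, Sym2.map π e ∈ P ∧ Sym2.map π f ∈ P} : ℝ) / (n.factorial : ℝ)
          - ((t : ℝ) - 2) / ((n : ℝ) - 2)|
        ≤ 3 * (t : ℝ) ^ 2 / (n : ℝ) ^ 2 :=
  prob_same_member_close_general t ht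
end
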